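/- arXiv:2410.20793 — 3 statements merged into one kernel-verified Lean document; each statement's English description precedes it below -/
import Mathlib

section
/- For positive semidefinite matrices X ≠ 0, Y ≠ 0, K, L, the relative entropy of tensor products satisfies D(X⊗Y ‖ K⊗L) = Tr(Y)·D(X‖K) + Tr(X)·D(Y‖L). -/
open Matrix Finset
open Kronecker
open scoped Classical ComplexOrder

variable {ι : Type*} [Fintype ι] [DecidableEq ι]

/-- Matrix logarithm of a Hermitian matrix (0 otherwise), via spectral decomposition. -/
noncomputable def mlog (A : Matrix ι ι ℂ) : Matrix ι ι ℂ :=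
  if h : A.IsHermitian then
    (h.eigenvectorUnitary : Matrix ι ι ℂ) *
      Matrix.diagonal (fun i => (Real.log (h.eigenvalues i) : ℂ)) *
      (star h.eigenvectorUnitary : Matrix ι ι ℂ)
  else 0

/-- von Neumann entropy of a positive semidefinite matrix. -/
noncomputable def vnEnt (A : Matrix ι ι ℂ) : ℝ :=
  -(A * mlog A).trace.re

/-- supp(P) ⊆ supp(Q), as ranges of the associated linear maps. -/
def suppLE (P Q : Matrix ι ι ℂ) : Prop :=
  LinearMap.range (Matrix.toLin' P) ≤ LinearMap.range (Matrix.toLin' Q)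

/-- Quantum relative entropy of positive semidefinite matrices, extended-real valued:
`D(P‖Q) = Tr(P log P) - Tr(P log Q)` if `supp P ⊆ supp Q`, and `+∞` otherwise. -/
noncomputable def relEnt (P Q : Matrix ι ι ℂ) : EReal :=
  if suppLE P Q then (((P * mlog P).trace.re - (P * mlog Q).trace.re : ℝ) : EReal)
  else ⊤

/-- Dephasing channel in the (incoherent) basis indexing the matrix. -/
def deph (ρ : Matrix ι ι ℂ) : Matrix ι ι ℂ :=
  Matrix.diagonal (fun i => ρ i i)

/-- Measurement relative entropy between two `n`-outcome POVMs on a `D`-dimensional space: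
`D_m(M‖N) = (1/D) Σ_x D(M_x‖N_x)`. -/
noncomputable def measRelEnt {χ : Type*} [Fintype χ] (D : ℕ) (M N : χ → Matrix ι ι ℂ) : EReal :=
  (((D : ℝ)⁻¹ : ℝ) : EReal) * ∑ x, relEnt (M x) (N x)


/-- conjugation by a "unitary" as an algebra hom -/
noncomputable def conjAH (W : Matrix ι ι ℂ) (h1 : star W * W = 1) (h2 : W * star W = 1) :
    Matrix ι ι ℂ →ₐ[ℂ] Matrix ι ι ℂ where
  toFun B := W * B * star W
  map_one' := by show W * 1 * star W = 1; rw [mul_one, h2]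
  map_mul' A B := by
    show W * (A * B) * star W = W * A * star W * (W * B * star W)
    have : W * A * star W * (W * B * star W) = W * A * (star W * W) * (B * star W) := by
      simp only [Matrix.mul_assoc]
    rw [this, h1, mul_one]
    simp only [Matrix.mul_assoc]
  map_zero' := by simp
  map_add' A B := by
    show W * (A + B) * star W = W * A * star W + W * B * star W
    rw [Matrix.mul_add, Matrix.add_mul]
  commutes' c := by
    show W * algebraMap ℂ (Matrix ι ι ℂ) c * star W = _
    simp only [Algebra.algebraMap_eq_smul_one, Matrix.mul_smul, mul_one, Matrix.smul_mul, h2]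

lemma aeval_conj (W : Matrix ι ι ℂ) (h1 : star W * W = 1) (h2 : W * star W = 1)
    (B : Matrix ι ι ℂ) (p : Polynomial ℂ) :
    Polynomial.aeval (W * B * star W) p = W * Polynomial.aeval B p * star W :=
  Polynomial.aeval_algHom_apply (conjAH W h1 h2) B p

lemma aeval_diag (d : ι → ℂ) (p : Polynomial ℂ) :
    Polynomial.aeval (Matrix.diagonal d) p = Matrix.diagonal fun i => Polynomial.aeval (d i) p := by
  have h := Polynomial.aeval_algHom_apply (Matrix.diagonalAlgHom (n := ι) (α := ℂ) ℂ) d p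
  simp only [Matrix.diagonalAlgHom_apply] at h
  have h2 : (Polynomial.aeval d p : ι → ℂ) = fun i => Polynomial.aeval (d i) p := by
    funext i
    exact (Polynomial.aeval_algHom_apply (Pi.evalAlgHom ℂ (fun _ => ℂ) i) d p).symm
  rw [h, h2]

lemma aeval_real_scalar (x : ℝ) (q : Polynomial ℝ) :
    Polynomial.aeval (x : ℂ) (q.map (algebraMap ℝ ℂ)) = ((q.eval x : ℝ) : ℂ) := by
  rw [Polynomial.aeval_map_algebraMap]
  exact Polynomial.aeval_algebraMap_apply_eq_algebraMap_eval x q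

lemma funcalc_piece (f : ℝ → ℝ) (s : Finset ℝ) (q : Polynomial ℝ)
    (hq : ∀ x ∈ s, q.eval x = f x)
    (W : Matrix ι ι ℂ) (h1 : star W * W = 1) (h2 : W * star W = 1)
    (d : ι → ℝ) (hd : ∀ i, d i ∈ s) :
    W * Matrix.diagonal (fun i => (f (d i) : ℂ)) * star W =
      Polynomial.aeval (W * Matrix.diagonal (fun i => (d i : ℂ)) * star W)
        (q.map (algebraMap ℝ ℂ)) := by
  rw [aeval_conj W h1 h2, aeval_diag]
  have hfun : (fun i => (f (d i) : ℂ)) =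
      fun i => Polynomial.aeval ((d i : ℂ)) (q.map (algebraMap ℝ ℂ)) := by
    funext i
    rw [aeval_real_scalar, hq _ (hd i)]
  rw [hfun]

lemma funcalc_unique (f : ℝ → ℝ) {W₁ W₂ : Matrix ι ι ℂ} {d₁ d₂ : ι → ℝ}
    (h11 : star W₁ * W₁ = 1) (h12 : W₁ * star W₁ = 1)
    (h21 : star W₂ * W₂ = 1) (h22 : W₂ * star W₂ = 1)
    (e : W₁ * Matrix.diagonal (fun i => (d₁ i : ℂ)) * star W₁ =
         W₂ * Matrix.diagonal (fun i => (d₂ i : ℂ)) * star W₂) :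
    W₁ * Matrix.diagonal (fun i => (f (d₁ i) : ℂ)) * star W₁ =
      W₂ * Matrix.diagonal (fun i => (f (d₂ i) : ℂ)) * star W₂ := by
  classical
  set s : Finset ℝ := (Finset.univ.image d₁) ∪ (Finset.univ.image d₂) with hs
  set q : Polynomial ℝ := Lagrange.interpolate s id f with hqdef
  have hq : ∀ x ∈ s, q.eval x = f x := by
    intro x hx
    simpa [hqdef] using Lagrange.eval_interpolate_at_node (v := id) (r := f) (Set.injOn_id _) hx
  have hd₁ : ∀ i, d₁ i ∈ s := fun i => Finset.mem_union_left _ (Finset.mem_image_of_mem _ (Finset.mem_univ i))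
  have hd₂ : ∀ i, d₂ i ∈ s := fun i => Finset.mem_union_right _ (Finset.mem_image_of_mem _ (Finset.mem_univ i))
  rw [funcalc_piece f s q hq W₁ h11 h12 d₁ hd₁, funcalc_piece f s q hq W₂ h21 h22 d₂ hd₂, e]

/-- the matrix log through any unitary diagonalization -/
lemma mlog_eq_of {A : Matrix ι ι ℂ} (hA : A.IsHermitian) {W : Matrix ι ι ℂ} {d : ι → ℝ}
    (h1 : star W * W = 1) (h2 : W * star W = 1)
    (e : A = W * Matrix.diagonal (fun i => (d i : ℂ)) * star W) :
    mlog A = W * Matrix.diagonal (fun i => (Real.log (d i) : ℂ)) * star W := by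
  rw [mlog, dif_pos hA]
  have hu1 : star (hA.eigenvectorUnitary : Matrix ι ι ℂ) * (hA.eigenvectorUnitary : Matrix ι ι ℂ) = 1 :=
    Unitary.coe_star_mul_self _
  have hu2 : (hA.eigenvectorUnitary : Matrix ι ι ℂ) * star (hA.eigenvectorUnitary : Matrix ι ι ℂ) = 1 :=
    Unitary.coe_mul_star_self _
  refine funcalc_unique Real.log hu1 hu2 h1 h2 ?_
  rw [← e]
  have := hA.spectral_theorem
  rw [Unitary.conjStarAlgAut_apply] at this
  exact this.symm

lemma supp_to_ker {P Q : Matrix ι ι ℂ} (hP : P.PosSemidef) (hQ : Q.IsHermitian)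
    (h : suppLE P Q) : ∀ v, Q *ᵥ v = 0 → P *ᵥ v = 0 := by
  intro v hv
  obtain ⟨u, hu⟩ := h (LinearMap.mem_range_self (Matrix.toLin' P) v)
  have hPv : P *ᵥ v = Q *ᵥ u := by
    simpa [Matrix.toLin'_apply] using hu.symm
  rw [← hP.dotProduct_mulVec_zero_iff, hPv, dotProduct_mulVec]
  have hsv : star v ᵥ* Q = 0 := by
    rw [← hQ.eq, ← Matrix.star_mulVec, hv, star_zero]
  rw [hsv, zero_dotProduct]

lemma star_dot_herm {P : Matrix ι ι ℂ} (hP : P.IsHermitian) (x w : ι → ℂ) :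
    star x ⬝ᵥ (P *ᵥ w) = star (P *ᵥ x) ⬝ᵥ w := by
  rw [dotProduct_mulVec, Matrix.star_mulVec, hP.eq]

lemma starU_mulVec_apply (U : Matrix ι ι ℂ) (y : ι → ℂ) (i : ι) :
    (star U *ᵥ y) i = star (fun k => U k i) ⬝ᵥ y := by
  simp [Matrix.mulVec, dotProduct, Matrix.star_eq_conjTranspose,
    Matrix.conjTranspose_apply]

lemma ker_to_supp {P Q : Matrix ι ι ℂ} (hP : P.IsHermitian) (hQ : Q.IsHermitian)
    (h : ∀ v, Q *ᵥ v = 0 → P *ᵥ v = 0) : suppLE P Q := by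
  intro y hy
  obtain ⟨w, rfl⟩ := hy
  set U : Matrix ι ι ℂ := (hQ.eigenvectorUnitary : Matrix ι ι ℂ) with hU
  set lam := hQ.eigenvalues with hlam
  have hu1 : star U * U = 1 := Unitary.coe_star_mul_self _
  have hu2 : U * star U = 1 := Unitary.coe_mul_star_self _
  have hcol : ∀ i, lam i = 0 → P *ᵥ (fun k => U k i) = 0 := by
    intro i h0
    apply h
    have hcolv : (fun k => U k i) = ⇑(hQ.eigenvectorBasis i) := by
      funext k; exact hQ.eigenvectorUnitary_apply k i
    rw [hcolv, hQ.mulVec_eigenvectorBasis i, ← hlam, h0, zero_smul]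
  set c : ι → ℂ := (star U) *ᵥ (P *ᵥ w) with hc
  have hczero : ∀ i, lam i = 0 → c i = 0 := by
    intro i h0
    rw [hc, starU_mulVec_apply, star_dot_herm hP, hcol i h0, star_zero, zero_dotProduct]
  set g : ι → ℂ := fun i => if lam i = 0 then 0 else ((lam i : ℂ))⁻¹ * c i with hg
  refine ⟨U *ᵥ g, ?_⟩
  rw [Matrix.toLin'_apply, Matrix.toLin'_apply]
  have hQe : Q = U * Matrix.diagonal (fun i => (lam i : ℂ)) * star U := by
    simpa [Function.comp_def] using hQ.spectral_theorem
  rw [hQe, ← Matrix.mulVec_mulVec, ← Matrix.mulVec_mulVec]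
  have hsUU : star U *ᵥ (U *ᵥ g) = g := by
    rw [Matrix.mulVec_mulVec, hu1, Matrix.one_mulVec]
  rw [hsUU]
  have hDg : Matrix.diagonal (fun i => (lam i : ℂ)) *ᵥ g = c := by
    funext i
    rw [Matrix.mulVec_diagonal]
    by_cases h0 : lam i = 0
    · simp [hg, h0, hczero i h0]
    · have : (lam i : ℂ) ≠ 0 := Complex.ofReal_ne_zero.mpr h0
      simp only [hg, if_neg h0]
      field_simp
    
  rw [hDg, hc, Matrix.mulVec_mulVec, hu2, Matrix.one_mulVec]

section Kron
variable {κ : Type*} [Fintype κ] [DecidableEq κ]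

lemma kron_conjTranspose (A : Matrix ι ι ℂ) (B : Matrix κ κ ℂ) :
    (A ⊗ₖ B)ᴴ = Aᴴ ⊗ₖ Bᴴ := by
  ext ⟨a, b⟩ ⟨c, d⟩
  simp [Matrix.conjTranspose_apply, Matrix.kroneckerMap_apply]

lemma kron_herm {A : Matrix ι ι ℂ} {B : Matrix κ κ ℂ} (hA : A.IsHermitian)
    (hB : B.IsHermitian) : (A ⊗ₖ B).IsHermitian := by
  show (A ⊗ₖ B)ᴴ = A ⊗ₖ B
  rw [kron_conjTranspose, hA.eq, hB.eq]

lemma kron_star (A : Matrix ι ι ℂ) (B : Matrix κ κ ℂ) :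
    star (A ⊗ₖ B) = star A ⊗ₖ star B := by
  simp only [Matrix.star_eq_conjTranspose]
  exact kron_conjTranspose A B

lemma kron_decomp {Q₁ : Matrix ι ι ℂ} {Q₂ : Matrix κ κ ℂ}
    (h1 : Q₁.IsHermitian) (h2 : Q₂.IsHermitian) :
    Q₁ ⊗ₖ Q₂ = ((h1.eigenvectorUnitary : Matrix ι ι ℂ) ⊗ₖ (h2.eigenvectorUnitary : Matrix κ κ ℂ)) *
      Matrix.diagonal (fun p : ι × κ => ((h1.eigenvalues p.1 * h2.eigenvalues p.2 : ℝ) : ℂ)) *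
      star ((h1.eigenvectorUnitary : Matrix ι ι ℂ) ⊗ₖ (h2.eigenvectorUnitary : Matrix κ κ ℂ)) := by
  set U : Matrix ι ι ℂ := (h1.eigenvectorUnitary : Matrix ι ι ℂ)
  set V : Matrix κ κ ℂ := (h2.eigenvectorUnitary : Matrix κ κ ℂ)
  have hdiag : Matrix.diagonal (fun p : ι × κ => ((h1.eigenvalues p.1 * h2.eigenvalues p.2 : ℝ) : ℂ))
      = Matrix.diagonal (fun i => (h1.eigenvalues i : ℂ)) ⊗ₖ
        Matrix.diagonal (fun j => (h2.eigenvalues j : ℂ)) := by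
    rw [Matrix.diagonal_kronecker_diagonal]
    push_cast
    rfl
  rw [hdiag, kron_star, ← Matrix.mul_kronecker_mul, ← Matrix.mul_kronecker_mul]
  have e1 : Q₁ = U * Matrix.diagonal (fun i => (h1.eigenvalues i : ℂ)) * star U := by
    simpa [Function.comp_def] using h1.spectral_theorem
  have e2 : Q₂ = V * Matrix.diagonal (fun j => (h2.eigenvalues j : ℂ)) * star V := by
    simpa [Function.comp_def] using h2.spectral_theorem
  rw [← e1, ← e2]

lemma kron_unitary {U : Matrix ι ι ℂ} {V : Matrix κ κ ℂ}
    (hU1 : star U * U = 1) (hV1 : star V * V = 1) :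
    star (U ⊗ₖ V) * (U ⊗ₖ V) = 1 := by
  rw [kron_star, ← Matrix.mul_kronecker_mul, hU1, hV1, Matrix.one_kronecker_one]

lemma mlog_kron {Q₁ : Matrix ι ι ℂ} {Q₂ : Matrix κ κ ℂ}
    (h1 : Q₁.IsHermitian) (h2 : Q₂.IsHermitian) :
    mlog (Q₁ ⊗ₖ Q₂) =
      ((h1.eigenvectorUnitary : Matrix ι ι ℂ) ⊗ₖ (h2.eigenvectorUnitary : Matrix κ κ ℂ)) *
      Matrix.diagonal (fun p : ι × κ =>
        (Real.log (h1.eigenvalues p.1 * h2.eigenvalues p.2) : ℂ)) *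
      star ((h1.eigenvectorUnitary : Matrix ι ι ℂ) ⊗ₖ (h2.eigenvectorUnitary : Matrix κ κ ℂ)) := by
  have hU1 : star (h1.eigenvectorUnitary : Matrix ι ι ℂ) * (h1.eigenvectorUnitary : Matrix ι ι ℂ) = 1 :=
    Unitary.coe_star_mul_self _
  have hU2 : (h1.eigenvectorUnitary : Matrix ι ι ℂ) * star (h1.eigenvectorUnitary : Matrix ι ι ℂ) = 1 :=
    Unitary.coe_mul_star_self _
  have hV1 : star (h2.eigenvectorUnitary : Matrix κ κ ℂ) * (h2.eigenvectorUnitary : Matrix κ κ ℂ) = 1 :=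
    Unitary.coe_star_mul_self _
  have hV2 : (h2.eigenvectorUnitary : Matrix κ κ ℂ) * star (h2.eigenvectorUnitary : Matrix κ κ ℂ) = 1 :=
    Unitary.coe_mul_star_self _
  have hW1 := kron_unitary hU1 hV1
  have hW2 : ((h1.eigenvectorUnitary : Matrix ι ι ℂ) ⊗ₖ (h2.eigenvectorUnitary : Matrix κ κ ℂ)) *
      star ((h1.eigenvectorUnitary : Matrix ι ι ℂ) ⊗ₖ (h2.eigenvectorUnitary : Matrix κ κ ℂ)) = 1 := by
    rw [kron_star, ← Matrix.mul_kronecker_mul, hU2, hV2, Matrix.one_kronecker_one]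
  exact mlog_eq_of (kron_herm h1 h2) hW1 hW2 (kron_decomp h1 h2)

end Kron

lemma trace_P_mul_conj_diag (P W : Matrix ι ι ℂ) (c : ι → ℂ) :
    (P * (W * Matrix.diagonal c * star W)).trace = ∑ i, c i * ((star W * P * W) i i) := by
  have ha : P * (W * Matrix.diagonal c * star W) = (P * W * Matrix.diagonal c) * star W := by
    simp [Matrix.mul_assoc]
  rw [ha, Matrix.trace_mul_comm]
  have hb : star W * (P * W * Matrix.diagonal c) = (star W * P * W) * Matrix.diagonal c := by
    simp [Matrix.mul_assoc]
  rw [hb, Matrix.trace]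
  simp [Matrix.diag, Matrix.mul_diagonal, mul_comm]

lemma conj_psd {P : Matrix ι ι ℂ} (hP : P.PosSemidef) (W : Matrix ι ι ℂ) :
    (star W * P * W).PosSemidef := by
  simpa [Matrix.star_eq_conjTranspose] using hP.mul_mul_conjTranspose_same (star W)

lemma psd_entry_re {M : Matrix ι ι ℂ} (hM : M.PosSemidef) (i : ι) :
    M i i = ((M i i).re : ℂ) := by
  have h0 : (0 : ℂ) ≤ M i i := by
    exact hM.diag_nonneg
  have := (Complex.le_def.mp h0).2
  exact (Complex.ext (by simp) (by simp [← this])).symm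

lemma conj_entry (P U : Matrix ι ι ℂ) (i : ι) :
    (star U * P * U) i i = star (fun k => U k i) ⬝ᵥ (P *ᵥ fun k => U k i) := by
  simp only [Matrix.mul_apply, Matrix.mulVec, dotProduct, Pi.star_apply,
    Matrix.star_eq_conjTranspose, Matrix.conjTranspose_apply, Finset.sum_mul, Finset.mul_sum]
  rw [Finset.sum_comm]
  apply Finset.sum_congr rfl
  intro k _
  apply Finset.sum_congr rfl
  intro l _
  ring

lemma eigencol_zero {Q : Matrix ι ι ℂ} (hQ : Q.IsHermitian) (i : ι)
    (h0 : hQ.eigenvalues i = 0) :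
    Q *ᵥ (fun k => (hQ.eigenvectorUnitary : Matrix ι ι ℂ) k i) = 0 := by
  have hcolv : (fun k => (hQ.eigenvectorUnitary : Matrix ι ι ℂ) k i) = ⇑(hQ.eigenvectorBasis i) := by
    funext k; exact hQ.eigenvectorUnitary_apply k i
  rw [hcolv, hQ.mulVec_eigenvectorBasis i, h0, zero_smul]

lemma diag_p_zero {P Q : Matrix ι ι ℂ} (hP : P.PosSemidef) (hQ : Q.IsHermitian)
    (hs : suppLE P Q) (i : ι) (h0 : hQ.eigenvalues i = 0) :
    (star (hQ.eigenvectorUnitary : Matrix ι ι ℂ) * P * (hQ.eigenvectorUnitary : Matrix ι ι ℂ)) i i = 0 := by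
  rw [conj_entry]
  rw [supp_to_ker hP hQ hs _ (eigencol_zero hQ i h0), dotProduct_zero]

lemma diag_p_sum {P : Matrix ι ι ℂ} (U : Matrix ι ι ℂ) (hu2 : U * star U = 1) :
    ∑ i, (star U * P * U) i i = P.trace := by
  have : ∑ i, (star U * P * U) i i = (star U * P * U).trace := rfl
  rw [this, Matrix.trace_mul_cycle, hu2, Matrix.one_mul]

/-- trace of `P * mlog Q` as a real sum. -/
lemma trace_mlog_eq {P Q : Matrix ι ι ℂ} (hQ : Q.IsHermitian) :
    (P * mlog Q).trace = ∑ i, (Real.log (hQ.eigenvalues i) : ℂ) *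
      ((star (hQ.eigenvectorUnitary : Matrix ι ι ℂ) * P * (hQ.eigenvectorUnitary : Matrix ι ι ℂ)) i i) := by
  rw [mlog, dif_pos hQ, trace_P_mul_conj_diag]

lemma trace_re_sum_form {P Q : Matrix ι ι ℂ} (hP : P.PosSemidef) (hQ : Q.IsHermitian) :
    (P * mlog Q).trace = ((∑ i, Real.log (hQ.eigenvalues i) *
      ((star (hQ.eigenvectorUnitary : Matrix ι ι ℂ) * P *
        (hQ.eigenvectorUnitary : Matrix ι ι ℂ)) i i).re : ℝ) : ℂ) := by
  rw [trace_mlog_eq hQ]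
  rw [Complex.ofReal_sum]
  apply Finset.sum_congr rfl
  intro i _
  rw [Complex.ofReal_mul, ← psd_entry_re (conj_psd hP _) i]

lemma trace_mlog_kron {κ : Type*} [Fintype κ] [DecidableEq κ]
    {P₁ Q₁ : Matrix ι ι ℂ} {P₂ Q₂ : Matrix κ κ ℂ}
    (hP₁ : P₁.PosSemidef) (hP₂ : P₂.PosSemidef) (hQ₁ : Q₁.PosSemidef) (hQ₂ : Q₂.PosSemidef)
    (hs1 : suppLE P₁ Q₁) (hs2 : suppLE P₂ Q₂) :
    ((P₁ ⊗ₖ P₂) * mlog (Q₁ ⊗ₖ Q₂)).trace.re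
      = P₂.trace.re * (P₁ * mlog Q₁).trace.re + P₁.trace.re * (P₂ * mlog Q₂).trace.re := by
  set U : Matrix ι ι ℂ := (hQ₁.1.eigenvectorUnitary : Matrix ι ι ℂ) with hUdef
  set V : Matrix κ κ ℂ := (hQ₂.1.eigenvectorUnitary : Matrix κ κ ℂ) with hVdef
  set lam := hQ₁.1.eigenvalues with hlamdef
  set mu := hQ₂.1.eigenvalues with hmudef
  have hu2 : U * star U = 1 := Unitary.coe_mul_star_self _
  have hv2 : V * star V = 1 := Unitary.coe_mul_star_self _
  set p : ι → ℝ := fun i => ((star U * P₁ * U) i i).re with hpdef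
  set q : κ → ℝ := fun j => ((star V * P₂ * V) j j).re with hqdef
  have hpc : ∀ i, (star U * P₁ * U) i i = ((p i : ℝ) : ℂ) :=
    fun i => psd_entry_re (conj_psd hP₁ U) i
  have hqc : ∀ j, (star V * P₂ * V) j j = ((q j : ℝ) : ℂ) :=
    fun j => psd_entry_re (conj_psd hP₂ V) j
  have hp0 : ∀ i, lam i = 0 → p i = 0 := by
    intro i h0
    have := diag_p_zero hP₁ hQ₁.1 hs1 i h0
    rw [hpdef]; exact (congrArg Complex.re this).trans Complex.zero_re
  have hq0 : ∀ j, mu j = 0 → q j = 0 := by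
    intro j h0
    have := diag_p_zero hP₂ hQ₂.1 hs2 j h0
    rw [hqdef]; exact (congrArg Complex.re this).trans Complex.zero_re
  have hpsum : ∑ i, p i = P₁.trace.re := by
    have h := congrArg Complex.re (diag_p_sum (P := P₁) U hu2)
    rw [← h, Complex.re_sum]
  have hqsum : ∑ j, q j = P₂.trace.re := by
    have h := congrArg Complex.re (diag_p_sum (P := P₂) V hv2)
    rw [← h, Complex.re_sum]
  have hm1 : (P₁ * mlog Q₁).trace.re = ∑ i, Real.log (lam i) * p i := by
    rw [trace_re_sum_form hP₁ hQ₁.1, Complex.ofReal_re]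
  have hm2 : (P₂ * mlog Q₂).trace.re = ∑ j, Real.log (mu j) * q j := by
    rw [trace_re_sum_form hP₂ hQ₂.1, Complex.ofReal_re]
  -- the kronecker trace
  have hWconj : star (U ⊗ₖ V) * (P₁ ⊗ₖ P₂) * (U ⊗ₖ V)
      = (star U * P₁ * U) ⊗ₖ (star V * P₂ * V) := by
    rw [kron_star, ← Matrix.mul_kronecker_mul, ← Matrix.mul_kronecker_mul]
  have htr : ((P₁ ⊗ₖ P₂) * mlog (Q₁ ⊗ₖ Q₂)).trace
      = ((∑ pr : ι × κ, Real.log (lam pr.1 * mu pr.2) * (p pr.1 * q pr.2) : ℝ) : ℂ) := by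
    rw [mlog_kron hQ₁.1 hQ₂.1, trace_P_mul_conj_diag, Complex.ofReal_sum]
    apply Finset.sum_congr rfl
    intro pr _
    rw [hWconj]
    have : ((star U * P₁ * U) ⊗ₖ (star V * P₂ * V)) pr pr
        = (star U * P₁ * U) pr.1 pr.1 * (star V * P₂ * V) pr.2 pr.2 := rfl
    rw [this, hpc, hqc]
    push_cast
    ring
  rw [htr, Complex.ofReal_re]
  have hsplit : ∀ pr : ι × κ, Real.log (lam pr.1 * mu pr.2) * (p pr.1 * q pr.2)
      = Real.log (lam pr.1) * p pr.1 * q pr.2 + p pr.1 * (Real.log (mu pr.2) * q pr.2) := by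
    intro pr
    by_cases h1 : lam pr.1 = 0
    · rw [hp0 _ h1]; ring
    by_cases h2 : mu pr.2 = 0
    · rw [hq0 _ h2]; ring
    rw [Real.log_mul h1 h2]; ring
  rw [Finset.sum_congr rfl (fun pr _ => hsplit pr), Finset.sum_add_distrib]
  have e1 : ∑ x : ι × κ, Real.log (lam x.1) * p x.1 * q x.2
      = (∑ i, Real.log (lam i) * p i) * (∑ j, q j) := by
    rw [Fintype.sum_prod_type, Finset.sum_mul_sum]
  have e2 : ∑ x : ι × κ, p x.1 * (Real.log (mu x.2) * q x.2)
      = (∑ i, p i) * (∑ j, Real.log (mu j) * q j) := by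
    rw [Fintype.sum_prod_type, Finset.sum_mul_sum]
  rw [e1, e2, ← hm1, ← hm2, ← hpsum, ← hqsum]
  ring

lemma mul_col_eq {κ' : Type*} [Fintype κ'] (X U : Matrix κ' κ' ℂ) (a i : κ') :
    (X * U) a i = (X *ᵥ fun k => U k i) a := by
  simp [Matrix.mul_apply, Matrix.mulVec, dotProduct]

lemma supp_kron {κ : Type*} [Fintype κ] [DecidableEq κ]
    {X K : Matrix ι ι ℂ} {Y L : Matrix κ κ ℂ}
    (hX : X.PosSemidef) (hY : Y.PosSemidef) (hK : K.PosSemidef) (hL : L.PosSemidef)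
    (hXK : suppLE X K) (hYL : suppLE Y L) :
    suppLE (X ⊗ₖ Y) (K ⊗ₖ L) := by
  apply ker_to_supp (kron_herm hX.1 hY.1) (kron_herm hK.1 hL.1)
  intro v hv
  set U : Matrix ι ι ℂ := (hK.1.eigenvectorUnitary : Matrix ι ι ℂ) with hUdef
  set V : Matrix κ κ ℂ := (hL.1.eigenvectorUnitary : Matrix κ κ ℂ) with hVdef
  set lam := hK.1.eigenvalues with hlamdef
  set mu := hL.1.eigenvalues with hmudef
  have hu1 : star U * U = 1 := Unitary.coe_star_mul_self _
  have hu2 : U * star U = 1 := Unitary.coe_mul_star_self _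
  have hv1 : star V * V = 1 := Unitary.coe_star_mul_self _
  have hv2 : V * star V = 1 := Unitary.coe_mul_star_self _
  have hW1 : star (U ⊗ₖ V) * (U ⊗ₖ V) = 1 := kron_unitary hu1 hv1
  have hW2 : (U ⊗ₖ V) * star (U ⊗ₖ V) = 1 := by
    rw [kron_star, ← Matrix.mul_kronecker_mul, hu2, hv2, Matrix.one_kronecker_one]
  set c : ι × κ → ℂ := star (U ⊗ₖ V) *ᵥ v with hcdef
  have hvc : v = (U ⊗ₖ V) *ᵥ c := by
    rw [hcdef, Matrix.mulVec_mulVec, hW2, Matrix.one_mulVec]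
  have hKLW : (K ⊗ₖ L) * (U ⊗ₖ V) = (U ⊗ₖ V) *
      Matrix.diagonal (fun pr : ι × κ => ((lam pr.1 * mu pr.2 : ℝ) : ℂ)) := by
    rw [kron_decomp hK.1 hL.1]
    rw [Matrix.mul_assoc, hW1, Matrix.mul_one]
  have hDc : Matrix.diagonal (fun pr : ι × κ => ((lam pr.1 * mu pr.2 : ℝ) : ℂ)) *ᵥ c = 0 := by
    have h0 : (U ⊗ₖ V) *ᵥ (Matrix.diagonal (fun pr : ι × κ => ((lam pr.1 * mu pr.2 : ℝ) : ℂ)) *ᵥ c) = 0 := by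
      rw [Matrix.mulVec_mulVec, ← hKLW, ← Matrix.mulVec_mulVec, ← hvc, hv]
    have h1 : star (U ⊗ₖ V) *ᵥ ((U ⊗ₖ V) *ᵥ
        (Matrix.diagonal (fun pr : ι × κ => ((lam pr.1 * mu pr.2 : ℝ) : ℂ)) *ᵥ c)) =
        Matrix.diagonal (fun pr : ι × κ => ((lam pr.1 * mu pr.2 : ℝ) : ℂ)) *ᵥ c := by
      rw [Matrix.mulVec_mulVec, Matrix.mulVec_mulVec, hW1, Matrix.one_mul]
    rw [← h1, h0, Matrix.mulVec_zero]
  have hterm : ∀ pr : ι × κ, ((lam pr.1 * mu pr.2 : ℝ) : ℂ) * c pr = 0 := by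
    intro pr
    have := congrFun hDc pr
    simpa [Matrix.mulVec_diagonal] using this
  rw [hvc, Matrix.mulVec_mulVec, ← Matrix.mul_kronecker_mul]
  funext x
  have hx : (((X * U) ⊗ₖ (Y * V)) *ᵥ c) x = ∑ pr : ι × κ, ((X * U) ⊗ₖ (Y * V)) x pr * c pr := rfl
  show (((X * U) ⊗ₖ (Y * V)) *ᵥ c) x = 0
  rw [hx]
  apply Finset.sum_eq_zero
  rintro ⟨i, j⟩ _
  by_cases hc0 : c (i, j) = 0
  · rw [hc0, mul_zero]
  have hlm : lam i * mu j = 0 := by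
    have := hterm (i, j)
    rcases mul_eq_zero.mp this with h | h
    · exact_mod_cast h
    · exact absurd h hc0
  have hent : ((X * U) ⊗ₖ (Y * V)) x (i, j) = (X * U) x.1 i * (Y * V) x.2 j := rfl
  rcases mul_eq_zero.mp hlm with h0 | h0
  · have hXcol : X *ᵥ (fun k => U k i) = 0 :=
      supp_to_ker hX hK.1 hXK _ (eigencol_zero hK.1 i h0)
    have hz : (X * U) x.1 i = 0 := by rw [mul_col_eq, hXcol]; simp
    rw [hent, hz, zero_mul, zero_mul]
  · have hYcol : Y *ᵥ (fun k => V k j) = 0 :=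
      supp_to_ker hY hL.1 hYL _ (eigencol_zero hL.1 j h0)
    have hz : (Y * V) x.2 j = 0 := by rw [mul_col_eq, hYcol]; simp
    rw [hent, hz, mul_zero, zero_mul]

/-- Relative entropy of tensor products:
`D(X⊗Y ‖ K⊗L) = Tr(Y)·D(X‖K) + Tr(X)·D(Y‖L)` for `X ≠ 0`, `Y ≠ 0`. -/
theorem stmt5 {dA dB : ℕ}
    (X K : Matrix (Fin dA) (Fin dA) ℂ) (Y L : Matrix (Fin dB) (Fin dB) ℂ)
    (hX : X.PosSemidef) (hY : Y.PosSemidef) (hK : K.PosSemidef) (hL : L.PosSemidef)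
    (hX0 : X ≠ 0) (hY0 : Y ≠ 0)
    (hXK : suppLE X K) (hYL : suppLE Y L) :
    relEnt (X ⊗ₖ Y) (K ⊗ₖ L) =
      ((Y.trace.re : ℝ) : EReal) * relEnt X K +
      ((X.trace.re : ℝ) : EReal) * relEnt Y L := by
  have hs : suppLE (X ⊗ₖ Y) (K ⊗ₖ L) := supp_kron hX hY hK hL hXK hYL
  rw [relEnt, if_pos hs, relEnt, if_pos hXK, relEnt, if_pos hYL]
  rw [← EReal.coe_mul, ← EReal.coe_mul, ← EReal.coe_add, EReal.coe_eq_coe_iff]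
  have h1 := trace_mlog_kron hX hY hX hY (le_refl _) (le_refl _)
  have h2 := trace_mlog_kron hX hY hK hL hXK hYL
  rw [h1, h2]
  ring
end

section
/- The measurement relative entropy is monotone under pre-composition with a unital positive trace-preserving map: if E is a unital completely positive trace-preserving map, then D_m(M∘E ‖ N∘E) ≤ D_m(M‖N), where M∘E denotes the POVM with elements E†(M_x) and E† is the adjoint (Heisenberg-picture) map of E. -/
open Matrix Finset
open Kronecker
open scoped Classical ComplexOrder

variable {ι : Type*} [Fintype ι] [DecidableEq ι]

namespace DPIProof

variable {d m : ℕ}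

abbrev Mat (d : ℕ) := Matrix (Fin d) (Fin d) ℂ





lemma trace_eq_sum_eigenvalues {A : Mat d} (hA : A.IsHermitian) :
    A.trace = ((∑ i, hA.eigenvalues i : ℝ) : ℂ) := by
  conv_lhs => rw [hA.spectral_theorem]
  rw [Unitary.conjStarAlgAut_apply, Matrix.trace_mul_cycle, Unitary.coe_star_mul_self, Matrix.one_mul, Matrix.trace_diagonal]
  push_cast
  rfl

lemma trace_re_nonneg {A : Mat d} (hA : A.PosSemidef) : 0 ≤ A.trace.re := by
  rw [trace_eq_sum_eigenvalues hA.isHermitian]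
  simp only [Complex.ofReal_re]
  exact Finset.sum_nonneg fun i _ => hA.eigenvalues_nonneg i

lemma trace_mul_re_nonneg {A B : Mat d} (hA : A.PosSemidef) (hB : B.PosSemidef) :
    0 ≤ (A * B).trace.re := by
  obtain ⟨C, rfl⟩ : ∃ C : Mat d, A = Cᴴ * C := by
    open scoped MatrixOrder in exact CStarAlgebra.nonneg_iff_eq_star_mul_self.mp hA.nonneg
  rw [Matrix.mul_assoc, Matrix.trace_mul_comm]
  exact trace_re_nonneg (hB.mul_mul_conjTranspose_same C)

lemma posSemidef_sum {ι : Type*} (s : Finset ι) (f : ι → Mat d)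
    (h : ∀ k ∈ s, (f k).PosSemidef) : (∑ k ∈ s, f k).PosSemidef := by
  classical
  induction s using Finset.induction with
  | empty => simpa using Matrix.PosSemidef.zero
  | @insert a s hx ih =>
    rw [Finset.sum_insert hx]
    exact ((h _ (Finset.mem_insert_self _ _)).add
      (ih fun k hk => h k (Finset.mem_insert_of_mem hk)))

/-- Kadison-Schwarz via explicit sum of squares. -/
lemma kadison_schwarz (A : Fin m → Mat d) (hU : ∑ k, A k * (A k)ᴴ = 1) (Y : Mat d) :
    (∑ k, A k * (Yᴴ * Y) * (A k)ᴴ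
      - (∑ k, A k * Y * (A k)ᴴ)ᴴ * (∑ k, A k * Y * (A k)ᴴ)).PosSemidef := by
  set B : Mat d := ∑ k, A k * Y * (A k)ᴴ with hB
  have hBH : Bᴴ = ∑ k, A k * Yᴴ * (A k)ᴴ := by
    rw [hB, Matrix.conjTranspose_sum]
    refine Finset.sum_congr rfl fun k _ => ?_
    simp [Matrix.conjTranspose_mul, Matrix.mul_assoc]
  have key : ∑ k, (Y * (A k)ᴴ - (A k)ᴴ * B)ᴴ * (Y * (A k)ᴴ - (A k)ᴴ * B)
      = ∑ k, A k * (Yᴴ * Y) * (A k)ᴴ - Bᴴ * B := by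
    have expand : ∀ k : Fin m, (Y * (A k)ᴴ - (A k)ᴴ * B)ᴴ * (Y * (A k)ᴴ - (A k)ᴴ * B)
        = A k * (Yᴴ * Y) * (A k)ᴴ - (A k * Yᴴ * (A k)ᴴ) * B
          - Bᴴ * (A k * Y * (A k)ᴴ) + Bᴴ * (A k * (A k)ᴴ) * B := by
      intro k
      simp only [Matrix.conjTranspose_sub, Matrix.conjTranspose_mul,
        Matrix.conjTranspose_conjTranspose]
      noncomm_ring
    rw [Finset.sum_congr rfl fun k _ => expand k]
    have e1 : ∑ k, (A k * Yᴴ * (A k)ᴴ) * B = Bᴴ * B := by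
      rw [← Finset.sum_mul, ← hBH]
    have e2 : ∑ k, Bᴴ * (A k * Y * (A k)ᴴ) = Bᴴ * B := by
      rw [← Finset.mul_sum, ← hB]
    have e3 : ∑ k, Bᴴ * (A k * (A k)ᴴ) * B = Bᴴ * B := by
      have : ∀ k : Fin m, Bᴴ * (A k * (A k)ᴴ) * B = Bᴴ * ((A k * (A k)ᴴ) * B) := fun k => by
        rw [Matrix.mul_assoc]
      rw [Finset.sum_congr rfl fun k _ => this k, ← Finset.mul_sum, ← Finset.sum_mul, hU,
        Matrix.one_mul]
    rw [Finset.sum_add_distrib, Finset.sum_sub_distrib, Finset.sum_sub_distrib, e1, e2, e3]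
    noncomm_ring
  rw [← key]
  exact posSemidef_sum _ _ fun k _ => Matrix.posSemidef_conjTranspose_mul_self _


/-- The concave quadratic functional whose sup is the resolvent quantity. -/
noncomputable def Ffun (ρ σ : Mat d) (s : ℝ) (Y : Mat d) : ℝ :=
  2 * ((ρ * Yᴴ).trace.re) - ((Yᴴ * σ * Y).trace.re) - s * ((ρ * Yᴴ * Y).trace.re)

lemma Ffun_le_opt {ρ σ : Mat d} (hρ : ρ.PosSemidef) (hσ : σ.PosSemidef) {s : ℝ} (hs : 0 ≤ s) {Ys : Mat d}
    (hE : σ * Ys + (s : ℂ) • (Ys * ρ) = ρ) (Y : Mat d) :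
    Ffun ρ σ s Y ≤ (ρ * Ysᴴ).trace.re := by
  have hσYs : σ * Ys = ρ - (s : ℂ) • (Ys * ρ) := eq_sub_of_add_eq hE
  have hYsσ : Ysᴴ * σ = ρ - (s : ℂ) • (ρ * Ysᴴ) := by
    have h := congrArg Matrix.conjTranspose hE
    simp only [Matrix.conjTranspose_add, Matrix.conjTranspose_smul, Matrix.conjTranspose_mul,
      hρ.isHermitian.eq, hσ.isHermitian.eq, Complex.star_def, Complex.conj_ofReal] at h
    exact eq_sub_of_add_eq h
  have cyc : ∀ P Q : Mat d, (P * ρ * Qᴴ).trace = (ρ * Qᴴ * P).trace := by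
    intro P Q
    rw [Matrix.trace_mul_cycle, Matrix.trace_mul_cycle]
  have h1 : ∀ W : Mat d, (Wᴴ * σ * Ys).trace
      = (ρ * Wᴴ).trace - (s : ℂ) * (ρ * Wᴴ * Ys).trace := by
    intro W
    rw [Matrix.mul_assoc, hσYs, Matrix.mul_sub, Matrix.trace_sub, Matrix.mul_smul,
      Matrix.trace_smul, smul_eq_mul]
    congr 1
    · exact Matrix.trace_mul_comm _ _
    · congr 1
      rw [← Matrix.mul_assoc, Matrix.trace_mul_comm, Matrix.mul_assoc]
  have h2 : (Ysᴴ * σ * Y).trace = (ρ * Y).trace - (s : ℂ) * (ρ * Ysᴴ * Y).trace := by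
    rw [hYsσ, Matrix.sub_mul, Matrix.trace_sub, Matrix.smul_mul, Matrix.trace_smul, smul_eq_mul]
  have key : (ρ * Yᴴ).trace + (ρ * Y).trace - (Yᴴ * σ * Y).trace
        - (s : ℂ) * (ρ * Yᴴ * Y).trace
      = (ρ * Ysᴴ).trace - ((Y - Ys)ᴴ * σ * (Y - Ys)).trace
        - (s : ℂ) * ((Y - Ys) * ρ * (Y - Ys)ᴴ).trace := by
    simp only [Matrix.conjTranspose_sub, Matrix.sub_mul, Matrix.mul_sub, Matrix.trace_sub]
    rw [cyc Y Y, cyc Y Ys, cyc Ys Y, cyc Ys Ys, h1 Y, h1 Ys, h2]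
    ring
  have hconj : (ρ * Y).trace = starRingEnd ℂ ((ρ * Yᴴ).trace) := by
    have h0 : ((ρ * Yᴴ)ᴴ).trace = star ((ρ * Yᴴ).trace) := Matrix.trace_conjTranspose _
    rw [Matrix.conjTranspose_mul, Matrix.conjTranspose_conjTranspose, hρ.isHermitian.eq,
      Matrix.trace_mul_comm] at h0
    exact h0
  have hre := congrArg Complex.re key
  simp only [Complex.sub_re, Complex.add_re] at hre
  have hsre : ∀ z : ℂ, ((s : ℂ) * z).re = s * z.re := fun z => by
    simp [Complex.mul_re]
  rw [hsre, hsre, hconj, Complex.conj_re] at hre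
  have e1 : 0 ≤ ((Y - Ys)ᴴ * σ * (Y - Ys)).trace.re :=
    trace_re_nonneg (hσ.conjTranspose_mul_mul_same _)
  have e2 : 0 ≤ ((Y - Ys) * ρ * (Y - Ys)ᴴ).trace.re :=
    trace_re_nonneg (hρ.mul_mul_conjTranspose_same _)
  have : Ffun ρ σ s Y = (ρ * Ysᴴ).trace.re - ((Y - Ys)ᴴ * σ * (Y - Ys)).trace.re
      - s * ((Y - Ys) * ρ * (Y - Ys)ᴴ).trace.re := by
    unfold Ffun; linarith [hre]
  rw [this]
  nlinarith [mul_nonneg hs e2]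


lemma trace_rot4_1 (P Q R S : Mat d) :
    (P * Q * R * S).trace = (S * P * Q * R).trace := by
  rw [Matrix.trace_mul_comm]
  simp only [← Matrix.mul_assoc]

lemma trace_rot5_1 (P Q R S T : Mat d) :
    (P * Q * R * S * T).trace = (T * P * Q * R * S).trace := by
  rw [Matrix.trace_mul_comm]
  simp only [← Matrix.mul_assoc]

/-- Data-processing step: the functional evaluated at `Y₀` for the processed pair is
dominated by the functional at `Φ̂ Y₀` for the original pair. -/
lemma Ffun_phiHat (A : Fin m → Mat d) (hU : ∑ k, A k * (A k)ᴴ = 1)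
    {ρ σ : Mat d} (hρ : ρ.PosSemidef) (hσ : σ.PosSemidef) {s : ℝ} (hs : 0 ≤ s) (Y0 : Mat d) :
    Ffun (∑ k, (A k)ᴴ * ρ * A k) (∑ k, (A k)ᴴ * σ * A k) s Y0
      ≤ Ffun ρ σ s (∑ k, A k * Y0 * (A k)ᴴ) := by
  set B : Mat d := ∑ k, A k * Y0 * (A k)ᴴ with hB
  have hBH : Bᴴ = ∑ k, A k * Y0ᴴ * (A k)ᴴ := by
    rw [hB, Matrix.conjTranspose_sum]
    exact Finset.sum_congr rfl fun k _ => by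
      simp [Matrix.conjTranspose_mul, Matrix.mul_assoc]
  -- first term: exact equality
  have eq1 : (ρ * Bᴴ).trace = ((∑ k, (A k)ᴴ * ρ * A k) * Y0ᴴ).trace := by
    rw [hBH, Matrix.mul_sum, Matrix.trace_sum, Matrix.sum_mul, Matrix.trace_sum]
    refine Finset.sum_congr rfl fun k _ => ?_
    simp only [← Matrix.mul_assoc]
    rw [trace_rot4_1 ρ (A k) Y0ᴴ (A k)ᴴ]
  -- σ-term
  have eq2 : (Bᴴ * σ * B).trace.re ≤ (Y0ᴴ * (∑ k, (A k)ᴴ * σ * A k) * Y0).trace.re := by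
    have hks := kadison_schwarz A hU Y0ᴴ
    simp only [Matrix.conjTranspose_conjTranspose, ← hBH] at hks
    have hmono := trace_mul_re_nonneg hσ hks
    rw [Matrix.mul_sub, Matrix.trace_sub] at hmono
    simp only [Complex.sub_re, sub_nonneg] at hmono
    have e1 : (Bᴴ * σ * B).trace = (σ * (B * Bᴴ)).trace := by
      rw [Matrix.trace_mul_cycle Bᴴ σ B, Matrix.trace_mul_cycle B Bᴴ σ, Matrix.mul_assoc]
    have e2 : (Y0ᴴ * (∑ k, (A k)ᴴ * σ * A k) * Y0).trace
        = (σ * ∑ k, A k * (Y0 * Y0ᴴ) * (A k)ᴴ).trace := by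
      rw [Matrix.trace_mul_cycle, Finset.mul_sum, Finset.mul_sum,
        Matrix.trace_sum, Matrix.trace_sum]
      refine Finset.sum_congr rfl fun k _ => ?_
      simp only [← Matrix.mul_assoc]
      rw [trace_rot5_1, trace_rot5_1]
    rw [e1, e2]
    exact hmono
  -- ρ-term
  have eq3 : (ρ * Bᴴ * B).trace.re ≤ ((∑ k, (A k)ᴴ * ρ * A k) * Y0ᴴ * Y0).trace.re := by
    have hks := kadison_schwarz A hU Y0
    rw [← hB] at hks
    have hmono := trace_mul_re_nonneg hρ hks
    rw [Matrix.mul_sub, Matrix.trace_sub] at hmono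
    simp only [Complex.sub_re, sub_nonneg] at hmono
    have e1 : (ρ * Bᴴ * B).trace = (ρ * (Bᴴ * B)).trace := by rw [Matrix.mul_assoc]
    have e2 : ((∑ k, (A k)ᴴ * ρ * A k) * Y0ᴴ * Y0).trace
        = (ρ * ∑ k, A k * (Y0ᴴ * Y0) * (A k)ᴴ).trace := by
      rw [Matrix.mul_assoc, Finset.sum_mul, Finset.mul_sum, Matrix.trace_sum, Matrix.trace_sum]
      refine Finset.sum_congr rfl fun k _ => ?_
      simp only [← Matrix.mul_assoc]
      rw [trace_rot5_1 ρ (A k) Y0ᴴ Y0 (A k)ᴴ]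
    rw [e1, e2]
    exact hmono
  unfold Ffun
  have hre1 : ((∑ k, (A k)ᴴ * ρ * A k) * Y0ᴴ).trace.re = (ρ * Bᴴ).trace.re := by rw [eq1]
  nlinarith [mul_le_mul_of_nonneg_left eq3 hs]


section Bridge
open Filter

lemma term_hasDeriv (t μ ν : ℝ) (hν : 0 ≤ ν)
    (hsupp : t ≠ 0 → ν ≠ 0 → 0 < μ) {T : ℝ} (hT : 0 ≤ T) :
    HasDerivAt (fun x : ℝ => t * ν * (Real.log (μ + x * ν) - Real.log μ))
      (t * ν * (ν / (μ + T * ν))) T := by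
  by_cases h0 : t * ν = 0
  · have heq : (fun x : ℝ => t * ν * (Real.log (μ + x * ν) - Real.log μ))
        = fun _ : ℝ => (0 : ℝ) := by
      funext x; rw [h0, zero_mul]
    rw [heq, h0, zero_mul]
    exact hasDerivAt_const T 0
  · have htne : t ≠ 0 := fun h => h0 (by rw [h, zero_mul])
    have hνne : ν ≠ 0 := fun h => h0 (by rw [h, mul_zero])
    have hμpos : 0 < μ := hsupp htne hνne
    have hpos : 0 < μ + T * ν :=
      add_pos_of_pos_of_nonneg hμpos (mul_nonneg hT hν)
    have hinner : HasDerivAt (fun x : ℝ => μ + x * ν) ν T := by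
      simpa using ((hasDerivAt_id T).mul_const ν).const_add μ
    have hlog := hinner.log (ne_of_gt hpos)
    simpa using (hlog.sub_const (Real.log μ)).const_mul (t * ν)

lemma bridge {ι κ : Type*} [Fintype ι] [Fintype κ]
    (t μ ν : ι → ℝ) (t' μ' ν' : κ → ℝ)
    (ht : ∀ i, 0 ≤ t i) (hμ : ∀ i, 0 ≤ μ i) (hν : ∀ i, 0 ≤ ν i)
    (ht' : ∀ j, 0 ≤ t' j) (hμ' : ∀ j, 0 ≤ μ' j) (hν' : ∀ j, 0 ≤ ν' j)
    (hsupp : ∀ i, t i ≠ 0 → ν i ≠ 0 → 0 < μ i)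
    (hsupp' : ∀ j, t' j ≠ 0 → ν' j ≠ 0 → 0 < μ' j)
    (htr : ∑ i, t i * ν i = ∑ j, t' j * ν' j)
    (hG : ∀ s : ℝ, 0 < s →
      ∑ j, t' j * ν' j * (ν' j / (μ' j + s * ν' j))
        ≤ ∑ i, t i * ν i * (ν i / (μ i + s * ν i))) :
    ∑ j, t' j * ν' j * (Real.log (ν' j) - Real.log (μ' j))
      ≤ ∑ i, t i * ν i * (Real.log (ν i) - Real.log (μ i)) := by
  set Λ : ℝ → ℝ := fun T =>
    (∑ i, t i * ν i * (Real.log (μ i + T * ν i) - Real.log (μ i)))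
      - ∑ j, t' j * ν' j * (Real.log (μ' j + T * ν' j) - Real.log (μ' j)) with hΛdef
  have hderiv : ∀ T : ℝ, 0 ≤ T → HasDerivAt Λ
      ((∑ i, t i * ν i * (ν i / (μ i + T * ν i)))
        - ∑ j, t' j * ν' j * (ν' j / (μ' j + T * ν' j))) T := by
    intro T hT
    exact (HasDerivAt.fun_sum fun i _ => term_hasDeriv _ _ _ (hν i) (hsupp i) hT).sub
      (HasDerivAt.fun_sum fun j _ => term_hasDeriv _ _ _ (hν' j) (hsupp' j) hT)
  have hmono : MonotoneOn Λ (Set.Ici 0) := by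
    apply monotoneOn_of_deriv_nonneg (convex_Ici 0)
    · exact fun x hx => ((hderiv x hx).continuousAt.continuousWithinAt)
    · intro x hx
      rw [interior_Ici] at hx
      exact ((hderiv x (le_of_lt hx)).differentiableAt.differentiableWithinAt)
    · intro x hx
      rw [interior_Ici] at hx
      rw [(hderiv x hx.le).deriv]
      exact sub_nonneg.mpr (hG x hx)
  have hΛ0 : Λ 0 = 0 := by simp [hΛdef]
  have hnn : ∀ T : ℝ, 0 ≤ T → 0 ≤ Λ T := by
    intro T hT
    have := hmono (Set.self_mem_Ici) (Set.mem_Ici.mpr hT) hT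
    rwa [hΛ0] at this
  -- rewrite for large T
  have hrw : ∀ T : ℝ, 0 < T → Λ T =
      (∑ i, t i * ν i * (Real.log (μ i / T + ν i) - Real.log (μ i)))
        - ∑ j, t' j * ν' j * (Real.log (μ' j / T + ν' j) - Real.log (μ' j)) := by
    intro T hT
    have keyterm : ∀ tt mm nn : ℝ, 0 ≤ nn → (tt ≠ 0 → nn ≠ 0 → 0 < mm) →
        tt * nn * (Real.log (mm + T * nn) - Real.log mm)
          = tt * nn * Real.log T + tt * nn * (Real.log (mm / T + nn) - Real.log mm) := by
      intro tt mm nn h3 h4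
      by_cases h0 : tt * nn = 0
      · rw [h0]; simp
      · have htne : tt ≠ 0 := fun h => h0 (by rw [h, zero_mul])
        have hνne : nn ≠ 0 := fun h => h0 (by rw [h, mul_zero])
        have hmpos : 0 < mm := h4 htne hνne
        have hnn2 : 0 < mm / T + nn :=
          add_pos_of_pos_of_nonneg (div_pos hmpos hT) h3
        have hsplit : mm + T * nn = T * (mm / T + nn) := by
          field_simp
        rw [hsplit, Real.log_mul (ne_of_gt hT) (ne_of_gt hnn2)]
        ring
    have e1 : ∑ i, t i * ν i * (Real.log (μ i + T * ν i) - Real.log (μ i))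
        = (∑ i, t i * ν i) * Real.log T
          + ∑ i, t i * ν i * (Real.log (μ i / T + ν i) - Real.log (μ i)) := by
      rw [Finset.sum_mul]
      rw [← Finset.sum_add_distrib]
      exact Finset.sum_congr rfl fun i _ => keyterm _ _ _ (hν i) (hsupp i)
    have e2 : ∑ j, t' j * ν' j * (Real.log (μ' j + T * ν' j) - Real.log (μ' j))
        = (∑ j, t' j * ν' j) * Real.log T
          + ∑ j, t' j * ν' j * (Real.log (μ' j / T + ν' j) - Real.log (μ' j)) := by
      rw [Finset.sum_mul]
      rw [← Finset.sum_add_distrib]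
      exact Finset.sum_congr rfl fun j _ => keyterm _ _ _ (hν' j) (hsupp' j)
    rw [hΛdef]
    simp only [e1, e2, htr]
    ring
  -- limit of each term
  have hterm : ∀ (tt mm nn : ℝ), 0 ≤ nn → (tt ≠ 0 → nn ≠ 0 → 0 < mm) →
      Tendsto (fun T : ℝ => tt * nn * (Real.log (mm / T + nn) - Real.log mm)) atTop
        (nhds (tt * nn * (Real.log nn - Real.log mm))) := by
    intro tt mm nn h3 h4
    by_cases h0 : tt * nn = 0
    · simp only [h0, zero_mul]
      exact tendsto_const_nhds
    · have hνne : nn ≠ 0 := fun h => h0 (by rw [h, mul_zero])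
      have hinner : Tendsto (fun T : ℝ => mm / T + nn) atTop (nhds nn) := by
        have h1 : Tendsto (fun T : ℝ => mm / T) atTop (nhds 0) :=
          Tendsto.div_atTop tendsto_const_nhds tendsto_id
        simpa using h1.add tendsto_const_nhds
      have hlog : Tendsto (fun T : ℝ => Real.log (mm / T + nn)) atTop
          (nhds (Real.log nn)) :=
        (Real.continuousAt_log hνne).tendsto.comp hinner
      exact ((hlog.sub_const (Real.log mm)).const_mul (tt * nn))
  have hlim : Tendsto Λ atTop
      (nhds ((∑ i, t i * ν i * (Real.log (ν i) - Real.log (μ i)))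
        - ∑ j, t' j * ν' j * (Real.log (ν' j) - Real.log (μ' j)))) := by
    have hlim0 : Tendsto (fun T : ℝ =>
        (∑ i, t i * ν i * (Real.log (μ i / T + ν i) - Real.log (μ i)))
          - ∑ j, t' j * ν' j * (Real.log (μ' j / T + ν' j) - Real.log (μ' j))) atTop
        (nhds ((∑ i, t i * ν i * (Real.log (ν i) - Real.log (μ i)))
          - ∑ j, t' j * ν' j * (Real.log (ν' j) - Real.log (μ' j)))) := by
      exact (tendsto_finset_sum _ fun i _ => hterm _ _ _ (hν i) (hsupp i)).sub
        (tendsto_finset_sum _ fun j _ => hterm _ _ _ (hν' j) (hsupp' j))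
    apply hlim0.congr'
    filter_upwards [eventually_gt_atTop (0 : ℝ)] with T hT
    exact (hrw T hT).symm
  have hfin : 0 ≤ (∑ i, t i * ν i * (Real.log (ν i) - Real.log (μ i)))
      - ∑ j, t' j * ν' j * (Real.log (ν' j) - Real.log (μ' j)) := by
    apply ge_of_tendsto hlim
    filter_upwards [eventually_ge_atTop (0 : ℝ)] with T hT
    exact hnn T hT
  linarith

end Bridge

section Spectral

lemma sum_mulVec' {α : Type*} (s : Finset α) (f : α → Mat d) (v : Fin d → ℂ) :
    (∑ k ∈ s, f k) *ᵥ v = ∑ k ∈ s, f k *ᵥ v := by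
  ext i
  simp [Matrix.mulVec, dotProduct, Matrix.sum_apply, Finset.sum_apply, Finset.sum_mul]
  rw [Finset.sum_comm]

lemma dotProduct_sum' {α : Type*} (s : Finset α) (v : Fin d → ℂ) (w : α → (Fin d → ℂ)) :
    v ⬝ᵥ (∑ k ∈ s, w k) = ∑ k ∈ s, v ⬝ᵥ w k := by
  simp [dotProduct, Finset.sum_apply, Finset.mul_sum]
  rw [Finset.sum_comm]

lemma trace_rot6_left (P Q R S T W : Mat d) :
    (P * Q * R * S * T * W).trace = (Q * R * S * T * W * P).trace := by
  simp only [Matrix.mul_assoc]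
  rw [Matrix.trace_mul_comm]
  simp only [← Matrix.mul_assoc]

lemma trace_dmd (f g : Fin d → ℝ) (M : Mat d) :
    (Matrix.diagonal (fun i => (f i : ℂ)) * M * Matrix.diagonal (fun i => (g i : ℂ)) * Mᴴ).trace
      = ((∑ b, ∑ a, f b * g a * Complex.normSq (M b a) : ℝ) : ℂ) := by
  rw [Matrix.trace]
  push_cast
  refine Finset.sum_congr rfl fun b _ => ?_
  rw [Matrix.diag_apply, Matrix.mul_apply]
  refine Finset.sum_congr rfl fun a _ => ?_
  rw [Matrix.mul_diagonal, Matrix.diagonal_mul, Matrix.conjTranspose_apply, Complex.star_def]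
  have h := Complex.mul_conj (M b a)
  push_cast
  linear_combination (f b : ℂ) * (g a : ℂ) * h

lemma trace_spec_pair (U V : Mat d) (f g : Fin d → ℝ) :
    ((U * Matrix.diagonal (fun i => (f i : ℂ)) * star U)
      * (V * Matrix.diagonal (fun i => (g i : ℂ)) * star V)).trace
    = ((∑ b, ∑ a, f b * g a * Complex.normSq ((star U * V) b a) : ℝ) : ℂ) := by
  rw [← trace_dmd f g (star U * V)]
  have hT : (star U * V)ᴴ = star V * U := by
    simp [Matrix.star_eq_conjTranspose, Matrix.conjTranspose_mul]
  rw [hT]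
  simp only [Matrix.star_eq_conjTranspose, ← Matrix.mul_assoc]
  exact trace_rot6_left U _ Uᴴ V _ Vᴴ

lemma normSq_col_sum {T : Mat d} (hT : Tᴴ * T = 1) (b : Fin d) :
    ∑ a, Complex.normSq (T a b) = 1 := by
  have h1 : ((Tᴴ * T) b b).re = 1 := by rw [hT]; simp
  rw [Matrix.mul_apply] at h1
  have h2 : ∀ a : Fin d, Complex.normSq (T a b) = (Tᴴ b a * T a b).re := fun a => by
    rw [Matrix.conjTranspose_apply, Complex.star_def, ← Complex.normSq_eq_conj_mul_self,
      Complex.ofReal_re]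
  rw [Finset.sum_congr rfl fun a _ => h2 a, ← Complex.re_sum]
  exact h1

lemma normSq_row_sum {T : Mat d} (hT : T * Tᴴ = 1) (a : Fin d) :
    ∑ b, Complex.normSq (T a b) = 1 := by
  have h1 : ((T * Tᴴ) a a).re = 1 := by rw [hT]; simp
  rw [Matrix.mul_apply] at h1
  have h2 : ∀ b : Fin d, Complex.normSq (T a b) = (T a b * Tᴴ b a).re := fun b => by
    rw [Matrix.conjTranspose_apply, Complex.star_def, Complex.mul_conj, Complex.ofReal_re]
  rw [Finset.sum_congr rfl fun b _ => h2 b, ← Complex.re_sum]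
  exact h1

variable {ρ σ : Mat d}

/-- Overlap weights between eigenbases of `σ` (first index) and `ρ` (second index). -/
noncomputable def tmat (hρ : ρ.PosSemidef) (hσ : σ.PosSemidef) (a b : Fin d) : ℝ :=
  Complex.normSq ((star (hσ.isHermitian.eigenvectorUnitary : Mat d) *
    (hρ.isHermitian.eigenvectorUnitary : Mat d)) a b)

lemma tmat_nonneg (hρ : ρ.PosSemidef) (hσ : σ.PosSemidef) (a b : Fin d) :
    0 ≤ tmat hρ hσ a b := Complex.normSq_nonneg _

lemma tmat_conj (hρ : ρ.PosSemidef) (hσ : σ.PosSemidef) (a b : Fin d) :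
    Complex.normSq ((star (hρ.isHermitian.eigenvectorUnitary : Mat d) *
      (hσ.isHermitian.eigenvectorUnitary : Mat d)) b a) = tmat hρ hσ a b := by
  have h : (star (hρ.isHermitian.eigenvectorUnitary : Mat d) *
      (hσ.isHermitian.eigenvectorUnitary : Mat d))
      = (star (hσ.isHermitian.eigenvectorUnitary : Mat d) *
        (hρ.isHermitian.eigenvectorUnitary : Mat d))ᴴ := by
    simp [Matrix.star_eq_conjTranspose, Matrix.conjTranspose_mul]
  rw [h, Matrix.conjTranspose_apply, Complex.star_def, Complex.normSq_conj]
  rfl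

lemma unit_mul_star (hρ : ρ.PosSemidef) :
    (hρ.isHermitian.eigenvectorUnitary : Mat d) *
      star (hρ.isHermitian.eigenvectorUnitary : Mat d) = 1 := by
  simpa using unitary.coe_mul_star_self (hρ.isHermitian.eigenvectorUnitary)

lemma star_mul_unit (hρ : ρ.PosSemidef) :
    star (hρ.isHermitian.eigenvectorUnitary : Mat d) *
      (hρ.isHermitian.eigenvectorUnitary : Mat d) = 1 := by
  simpa using unitary.coe_star_mul_self (hρ.isHermitian.eigenvectorUnitary)

lemma tmat_unitary_right (hρ : ρ.PosSemidef) (hσ : σ.PosSemidef) :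
    (star (hσ.isHermitian.eigenvectorUnitary : Mat d) *
      (hρ.isHermitian.eigenvectorUnitary : Mat d))
    * (star (hσ.isHermitian.eigenvectorUnitary : Mat d) *
      (hρ.isHermitian.eigenvectorUnitary : Mat d))ᴴ = 1 := by
  have h1 : (star (hσ.isHermitian.eigenvectorUnitary : Mat d) *
      (hρ.isHermitian.eigenvectorUnitary : Mat d))ᴴ
      = star (hρ.isHermitian.eigenvectorUnitary : Mat d) *
        (hσ.isHermitian.eigenvectorUnitary : Mat d) := by
    simp [Matrix.star_eq_conjTranspose, Matrix.conjTranspose_mul]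
  rw [h1]
  have h2 : (star (hσ.isHermitian.eigenvectorUnitary : Mat d) *
      (hρ.isHermitian.eigenvectorUnitary : Mat d))
      * (star (hρ.isHermitian.eigenvectorUnitary : Mat d) *
        (hσ.isHermitian.eigenvectorUnitary : Mat d))
      = star (hσ.isHermitian.eigenvectorUnitary : Mat d) *
        (((hρ.isHermitian.eigenvectorUnitary : Mat d) *
          star (hρ.isHermitian.eigenvectorUnitary : Mat d)) *
            (hσ.isHermitian.eigenvectorUnitary : Mat d)) := by
    simp only [Matrix.mul_assoc]
  rw [h2, unit_mul_star hρ, Matrix.one_mul]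
  exact star_mul_unit hσ

lemma tmat_unitary_left (hρ : ρ.PosSemidef) (hσ : σ.PosSemidef) :
    (star (hσ.isHermitian.eigenvectorUnitary : Mat d) *
      (hρ.isHermitian.eigenvectorUnitary : Mat d))ᴴ
    * (star (hσ.isHermitian.eigenvectorUnitary : Mat d) *
      (hρ.isHermitian.eigenvectorUnitary : Mat d)) = 1 := by
  have h1 : (star (hσ.isHermitian.eigenvectorUnitary : Mat d) *
      (hρ.isHermitian.eigenvectorUnitary : Mat d))ᴴ
      = star (hρ.isHermitian.eigenvectorUnitary : Mat d) *
        (hσ.isHermitian.eigenvectorUnitary : Mat d) := by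
    simp [Matrix.star_eq_conjTranspose, Matrix.conjTranspose_mul]
  rw [h1]
  have h2 : (star (hρ.isHermitian.eigenvectorUnitary : Mat d) *
      (hσ.isHermitian.eigenvectorUnitary : Mat d))
      * (star (hσ.isHermitian.eigenvectorUnitary : Mat d) *
        (hρ.isHermitian.eigenvectorUnitary : Mat d))
      = star (hρ.isHermitian.eigenvectorUnitary : Mat d) *
        (((hσ.isHermitian.eigenvectorUnitary : Mat d) *
          star (hσ.isHermitian.eigenvectorUnitary : Mat d)) *
            (hρ.isHermitian.eigenvectorUnitary : Mat d)) := by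
    simp only [Matrix.mul_assoc]
  rw [h2, unit_mul_star hσ, Matrix.one_mul]
  exact star_mul_unit hρ

lemma tmat_sum_left (hρ : ρ.PosSemidef) (hσ : σ.PosSemidef) (b : Fin d) :
    ∑ a, tmat hρ hσ a b = 1 :=
  normSq_col_sum (tmat_unitary_left hρ hσ) b

lemma tmat_sum_right (hρ : ρ.PosSemidef) (hσ : σ.PosSemidef) (a : Fin d) :
    ∑ b, tmat hρ hσ a b = 1 :=
  normSq_row_sum (tmat_unitary_right hρ hσ) a

lemma mlog_of_posSemidef (hσ : σ.PosSemidef) :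
    mlog σ = (hσ.isHermitian.eigenvectorUnitary : Mat d) *
      Matrix.diagonal (fun i => (Real.log (hσ.isHermitian.eigenvalues i) : ℂ)) *
      star (hσ.isHermitian.eigenvectorUnitary : Mat d) := by
  rw [mlog, dif_pos hσ.isHermitian]

lemma spectral_ofReal (hρ : ρ.PosSemidef) :
    ρ = (hρ.isHermitian.eigenvectorUnitary : Mat d) *
      Matrix.diagonal (fun i => ((hρ.isHermitian.eigenvalues i : ℝ) : ℂ)) *
      star (hρ.isHermitian.eigenvectorUnitary : Mat d) := by
  conv_lhs => rw [hρ.isHermitian.spectral_theorem]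
  rfl

/-- `Tr(ρ log σ)` via overlaps. -/
lemma trace_mul_mlog (hρ : ρ.PosSemidef) (hσ : σ.PosSemidef) :
    (ρ * mlog σ).trace.re = ∑ a, ∑ b, tmat hρ hσ a b * hρ.isHermitian.eigenvalues b *
      Real.log (hσ.isHermitian.eigenvalues a) := by
  have hprod : ρ * mlog σ
      = ((hρ.isHermitian.eigenvectorUnitary : Mat d) *
          Matrix.diagonal (fun i => ((hρ.isHermitian.eigenvalues i : ℝ) : ℂ)) *
          star (hρ.isHermitian.eigenvectorUnitary : Mat d))
        * ((hσ.isHermitian.eigenvectorUnitary : Mat d) *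
          Matrix.diagonal (fun i => ((Real.log (hσ.isHermitian.eigenvalues i) : ℝ) : ℂ)) *
          star (hσ.isHermitian.eigenvectorUnitary : Mat d)) := by
    rw [mlog_of_posSemidef hσ]
    congr 1
    exact spectral_ofReal hρ
  rw [hprod, trace_spec_pair, Complex.ofReal_re, Finset.sum_comm]
  refine Finset.sum_congr rfl fun a _ => Finset.sum_congr rfl fun b _ => ?_
  rw [tmat_conj hρ hσ a b]
  ring

/-- `Tr(ρ log ρ)` via eigenvalues. -/
lemma trace_mul_mlog_self (hρ : ρ.PosSemidef) :
    (ρ * mlog ρ).trace.re = ∑ b, hρ.isHermitian.eigenvalues b *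
      Real.log (hρ.isHermitian.eigenvalues b) := by
  have hprod : ρ * mlog ρ
      = ((hρ.isHermitian.eigenvectorUnitary : Mat d) *
          Matrix.diagonal (fun i => ((hρ.isHermitian.eigenvalues i : ℝ) : ℂ)) *
          star (hρ.isHermitian.eigenvectorUnitary : Mat d))
        * ((hρ.isHermitian.eigenvectorUnitary : Mat d) *
          Matrix.diagonal (fun i => ((Real.log (hρ.isHermitian.eigenvalues i) : ℝ) : ℂ)) *
          star (hρ.isHermitian.eigenvectorUnitary : Mat d)) := by
    rw [mlog_of_posSemidef hρ]
    congr 1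
    exact spectral_ofReal hρ
  rw [hprod, trace_spec_pair, Complex.ofReal_re, star_mul_unit hρ]
  refine Finset.sum_congr rfl fun b _ => ?_
  have hz : ∀ a ∈ Finset.univ, a ≠ b →
      hρ.isHermitian.eigenvalues b * Real.log (hρ.isHermitian.eigenvalues a) *
        Complex.normSq ((1 : Mat d) b a) = 0 := by
    intro a _ hab
    rw [Matrix.one_apply_ne (Ne.symm hab)]
    simp
  rw [Finset.sum_eq_single b hz (fun h => absurd (Finset.mem_univ b) h)]
  simp

lemma eig_sum_eq_trace_re (hρ : ρ.PosSemidef) :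
    ∑ b, hρ.isHermitian.eigenvalues b = ρ.trace.re := by
  rw [trace_eq_sum_eigenvalues hρ.isHermitian, Complex.ofReal_re]

end Spectral

section Support

lemma ker_of_suppLE {P Q : Mat d} (hP : P.PosSemidef) (hQ : Q.PosSemidef) (h : suppLE P Q) :
    ∀ v, Q *ᵥ v = 0 → P *ᵥ v = 0 := by
  intro v hv
  obtain ⟨w, hw⟩ := h (LinearMap.mem_range_self (Matrix.toLin' P) v)
  rw [Matrix.toLin'_apply, Matrix.toLin'_apply] at hw
  have key : star v ⬝ᵥ (P *ᵥ v) = 0 := by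
    rw [← hw, Matrix.dotProduct_mulVec]
    have h2 : star v ᵥ* Q = star (Q *ᵥ v) := by
      rw [Matrix.star_mulVec, hQ.isHermitian.eq]
    rw [h2, hv]
    simp
  exact (hP.dotProduct_mulVec_zero_iff v).mp key

lemma suppLE_of_ker' {P Q : Mat d} (hP : P.IsHermitian) (V : Mat d) (μ : Fin d → ℝ)
    (hV1 : star V * V = 1) (hV2 : V * star V = 1)
    (hQspec : Q = V * Matrix.diagonal (fun i => ((μ i : ℝ) : ℂ)) * star V)
    (h : ∀ v, Q *ᵥ v = 0 → P *ᵥ v = 0) : suppLE P Q := by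
  rintro x ⟨v, rfl⟩
  refine ⟨V *ᵥ (fun a => if μ a = 0 then 0
    else ((μ a : ℂ))⁻¹ * ((star V *ᵥ (P *ᵥ v)) a)), ?_⟩
  rw [Matrix.toLin'_apply, Matrix.toLin'_apply, Matrix.mulVec_mulVec]
  have hQV : Q * V = V * Matrix.diagonal (fun i => ((μ i : ℝ) : ℂ)) := by
    rw [hQspec, Matrix.mul_assoc, hV1, Matrix.mul_one]
  rw [hQV, ← Matrix.mulVec_mulVec]
  have hcomp0 : ∀ a : Fin d, μ a = 0 → (star V *ᵥ (P *ᵥ v)) a = 0 := by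
    intro a hμa
    set w : Fin d → ℂ := fun i => V i a with hwdef
    have hw1 : w = V *ᵥ Pi.single a 1 := by
      funext i
      simp [hwdef, Matrix.mulVec_single]
    have hQw : Q *ᵥ w = 0 := by
      rw [hw1, Matrix.mulVec_mulVec, hQV, ← Matrix.mulVec_mulVec,
        Matrix.diagonal_mulVec_single]
      have : Pi.single a ((μ a : ℂ) * 1) = (0 : Fin d → ℂ) := by
        rw [hμa]
        simp
      rw [this]
      simp
    have hPw : P *ᵥ w = 0 := h w hQw
    have hrow : (star V *ᵥ (P *ᵥ v)) a = star w ⬝ᵥ (P *ᵥ v) := by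
      simp only [Matrix.mulVec, dotProduct, hwdef]
      rfl
    rw [hrow, Matrix.dotProduct_mulVec]
    have h3 : star w ᵥ* P = star (P *ᵥ w) := by
      rw [Matrix.star_mulVec, hP.eq]
    rw [h3, hPw]
    simp
  have hdiag : (Matrix.diagonal (fun i => ((μ i : ℝ) : ℂ))) *ᵥ (fun a => if μ a = 0 then 0
      else ((μ a : ℂ))⁻¹ * ((star V *ᵥ (P *ᵥ v)) a)) = star V *ᵥ (P *ᵥ v) := by
    funext a
    rw [Matrix.mulVec_diagonal]
    by_cases hμa : μ a = 0
    · rw [if_pos hμa, hcomp0 a hμa]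
      simp
    · rw [if_neg hμa, ← mul_assoc, mul_inv_cancel₀ (Complex.ofReal_ne_zero.mpr hμa), one_mul]
  rw [hdiag, Matrix.mulVec_mulVec, hV2, Matrix.one_mulVec]

lemma ker_transfer (A : Fin m → Mat d) {P Q : Mat d} (hQ : Q.PosSemidef)
    (h : ∀ v, Q *ᵥ v = 0 → P *ᵥ v = 0) :
    ∀ v, (∑ k, (A k)ᴴ * Q * A k) *ᵥ v = 0 → (∑ k, (A k)ᴴ * P * A k) *ᵥ v = 0 := by
  intro v hv
  have hz : star v ⬝ᵥ ((∑ k, (A k)ᴴ * Q * A k) *ᵥ v) = 0 := by rw [hv]; simp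
  rw [sum_mulVec', dotProduct_sum'] at hz
  have hterm : ∀ k, star v ⬝ᵥ (((A k)ᴴ * Q * A k) *ᵥ v)
      = star (A k *ᵥ v) ⬝ᵥ (Q *ᵥ (A k *ᵥ v)) := by
    intro k
    rw [← Matrix.mulVec_mulVec, ← Matrix.mulVec_mulVec,
      Matrix.dotProduct_mulVec (star v)]
    congr 1
    rw [← Matrix.star_mulVec]
  rw [Finset.sum_congr rfl fun k _ => hterm k] at hz
  have hek : ∀ k : Fin m, Q *ᵥ (A k *ᵥ v) = 0 := by
    intro k
    have hnn : ∀ k ∈ (Finset.univ : Finset (Fin m)),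
        0 ≤ star (A k *ᵥ v) ⬝ᵥ (Q *ᵥ (A k *ᵥ v)) := fun k _ => hQ.dotProduct_mulVec_nonneg _
    have := (Finset.sum_eq_zero_iff_of_nonneg hnn).mp hz k (Finset.mem_univ k)
    exact (hQ.dotProduct_mulVec_zero_iff _).mp this
  rw [sum_mulVec']
  refine Finset.sum_eq_zero fun k _ => ?_
  rw [← Matrix.mulVec_mulVec, ← Matrix.mulVec_mulVec, h _ (hek k)]
  simp

lemma trace_phi (A : Fin m → Mat d) (hU : ∑ k, A k * (A k)ᴴ = 1) (P : Mat d) :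
    (∑ k, (A k)ᴴ * P * A k).trace = P.trace := by
  rw [Matrix.trace_sum]
  have hterm : ∀ k : Fin m, ((A k)ᴴ * P * A k).trace = (P * (A k * (A k)ᴴ)).trace := by
    intro k
    rw [Matrix.trace_mul_cycle, Matrix.trace_mul_comm]
  rw [Finset.sum_congr rfl fun k _ => hterm k, ← Matrix.trace_sum, ← Finset.mul_sum, hU,
    Matrix.mul_one]

lemma posSemidef_phi (A : Fin m → Mat d) {P : Mat d} (hP : P.PosSemidef) :
    (∑ k, (A k)ᴴ * P * A k).PosSemidef :=
  posSemidef_sum _ _ fun k _ => hP.conjTranspose_mul_mul_same _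

/-- support condition on the overlap weights -/
lemma tmat_supp (hρ : ρ.PosSemidef) (hσ : σ.PosSemidef) (h : suppLE ρ σ) (a b : Fin d)
    (hμa : hσ.isHermitian.eigenvalues a = 0) (hνb : hρ.isHermitian.eigenvalues b ≠ 0) :
    tmat hρ hσ a b = 0 := by
  set w : Fin d → ℂ := fun i => (hσ.isHermitian.eigenvectorUnitary : Mat d) i a with hwdef
  have hw1 : w = (hσ.isHermitian.eigenvectorUnitary : Mat d) *ᵥ Pi.single a 1 := by
    funext i
    simp [hwdef, Matrix.mulVec_single]
  have hQV : σ * (hσ.isHermitian.eigenvectorUnitary : Mat d)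
      = (hσ.isHermitian.eigenvectorUnitary : Mat d) *
        Matrix.diagonal (fun i => ((hσ.isHermitian.eigenvalues i : ℝ) : ℂ)) := by
    have h0 := congrArg
      (fun M : Mat d => M * (hσ.isHermitian.eigenvectorUnitary : Mat d)) (spectral_ofReal hσ)
    rw [h0, Matrix.mul_assoc, star_mul_unit hσ, Matrix.mul_one]
  have hQw : σ *ᵥ w = 0 := by
    rw [hw1, Matrix.mulVec_mulVec, hQV, ← Matrix.mulVec_mulVec,
      Matrix.diagonal_mulVec_single]
    have : Pi.single a (((hσ.isHermitian.eigenvalues a : ℝ) : ℂ) * 1) = (0 : Fin d → ℂ) := by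
      rw [hμa]
      simp
    rw [this]
    simp
  have hPw : ρ *ᵥ w = 0 := ker_of_suppLE hρ hσ h w hQw
  have hUρ : star (hρ.isHermitian.eigenvectorUnitary : Mat d) * ρ
      = Matrix.diagonal (fun i => ((hρ.isHermitian.eigenvalues i : ℝ) : ℂ)) *
        star (hρ.isHermitian.eigenvectorUnitary : Mat d) := by
    have h0 := congrArg
      (fun M : Mat d => star (hρ.isHermitian.eigenvectorUnitary : Mat d) * M)
      (spectral_ofReal hρ)
    rw [h0, ← Matrix.mul_assoc, ← Matrix.mul_assoc, star_mul_unit hρ, Matrix.one_mul]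
  have hzero : (Matrix.diagonal (fun i => ((hρ.isHermitian.eigenvalues i : ℝ) : ℂ)) *ᵥ
      (star (hρ.isHermitian.eigenvectorUnitary : Mat d) *ᵥ w)) b = 0 := by
    rw [Matrix.mulVec_mulVec, ← hUρ, ← Matrix.mulVec_mulVec, hPw]
    simp
  rw [Matrix.mulVec_diagonal] at hzero
  have hTzero : (star (hρ.isHermitian.eigenvectorUnitary : Mat d) *ᵥ w) b = 0 := by
    have hcast : ((hρ.isHermitian.eigenvalues b : ℝ) : ℂ) ≠ 0 :=
      Complex.ofReal_ne_zero.mpr hνb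
    exact (mul_eq_zero.mp hzero).resolve_left hcast
  have hTb : (star (hρ.isHermitian.eigenvectorUnitary : Mat d) *
      (hσ.isHermitian.eigenvectorUnitary : Mat d)) b a
      = (star (hρ.isHermitian.eigenvectorUnitary : Mat d) *ᵥ w) b := by
    simp only [Matrix.mul_apply, Matrix.mulVec, dotProduct, hwdef]
  rw [← tmat_conj hρ hσ a b, hTb, hTzero]
  simp

end Support

section Optimizer

lemma opt_exists_gen (ρ σ : Mat d) (U V : Mat d) (ν μ : Fin d → ℝ)
    (hρspec : ρ = U * Matrix.diagonal (fun i => ((ν i : ℝ) : ℂ)) * star U)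
    (hσspec : σ = V * Matrix.diagonal (fun i => ((μ i : ℝ) : ℂ)) * star V)
    (hU1 : star U * U = 1)
    (hV1 : star V * V = 1) (hV2 : V * star V = 1)
    (hν : ∀ b, 0 ≤ ν b) (hμ : ∀ a, 0 ≤ μ a)
    {s : ℝ} (hs : 0 < s) :
    ∃ Ys : Mat d, (σ * Ys + (s : ℂ) • (Ys * ρ) = ρ) ∧
      (ρ * Ysᴴ).trace.re
        = ∑ a, ∑ b, Complex.normSq ((star V * U) a b) * ν b * (ν b / (μ a + s * ν b)) := by
  set Dν := Matrix.diagonal (fun i => ((ν i : ℝ) : ℂ)) with hDν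
  set Dμ := Matrix.diagonal (fun i => ((μ i : ℝ) : ℂ)) with hDμ
  set T := star V * U with hT
  set N : Mat d := Matrix.of (fun a b => ((ν b / (μ a + s * ν b) : ℝ) : ℂ) * T a b) with hN
  refine ⟨V * N * star U, ?_, ?_⟩
  · have c1 : σ * (V * N * star U) = V * (Dμ * N) * star U := by
      rw [hσspec]
      have e : V * Dμ * star V * (V * N * star U)
          = V * Dμ * ((star V * V) * (N * star U)) := by
        simp only [Matrix.mul_assoc]
      rw [e, hV1, Matrix.one_mul]
      simp only [Matrix.mul_assoc]
    have c2 : (V * N * star U) * ρ = V * (N * Dν) * star U := by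
      rw [hρspec]
      have e : V * N * star U * (U * Dν * star U)
          = V * N * ((star U * U) * (Dν * star U)) := by
        simp only [Matrix.mul_assoc]
      rw [e, hU1, Matrix.one_mul]
      simp only [Matrix.mul_assoc]
    rw [c1, c2]
    have c3 : (s : ℂ) • (V * (N * Dν) * star U) = V * ((s : ℂ) • (N * Dν)) * star U := by
      simp only [Matrix.mul_smul, Matrix.smul_mul]
    rw [c3, ← Matrix.add_mul, ← Matrix.mul_add]
    have hkey : Dμ * N + (s : ℂ) • (N * Dν) = T * Dν := by
      ext a b
      simp only [Matrix.add_apply, Matrix.smul_apply, hDμ, hDν, Matrix.diagonal_mul,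
        Matrix.mul_diagonal, hN, Matrix.of_apply, smul_eq_mul]
      have hreal : (μ a + s * ν b) * (ν b / (μ a + s * ν b)) = ν b := by
        by_cases hd : μ a + s * ν b = 0
        · have hνb : ν b = 0 := by nlinarith [hν b, hμ a]
          rw [hνb]
          simp
        · rw [mul_comm, div_mul_cancel₀ _ hd]
      have hC := congrArg (fun x : ℝ => (x : ℂ)) hreal
      push_cast at hC ⊢
      linear_combination (T a b) * hC
    rw [hkey, ← Matrix.mul_assoc]
    have hVT : V * T = U := by
      rw [hT, ← Matrix.mul_assoc, hV2, Matrix.one_mul]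
    rw [hVT, ← hρspec]
  · have hYsH : (V * N * star U)ᴴ = U * (Nᴴ * star V) := by
      simp only [Matrix.star_eq_conjTranspose, Matrix.conjTranspose_mul,
        Matrix.conjTranspose_conjTranspose, Matrix.mul_assoc]
    have c4 : ρ * (U * (Nᴴ * star V)) = U * (Dν * Nᴴ) * star V := by
      rw [hρspec]
      have e : U * Dν * star U * (U * (Nᴴ * star V))
          = U * Dν * ((star U * U) * (Nᴴ * star V)) := by
        simp only [Matrix.mul_assoc]
      rw [e, hU1, Matrix.one_mul]
      simp only [Matrix.mul_assoc]
    rw [hYsH, c4]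
    have c5 : (U * (Dν * Nᴴ) * star V).trace = (Dν * (Nᴴ * T)).trace := by
      rw [Matrix.trace_mul_cycle, ← hT, Matrix.trace_mul_comm]
      simp only [Matrix.mul_assoc]
    rw [c5]
    have c6 : (Dν * (Nᴴ * T)).trace
        = ((∑ a, ∑ b, Complex.normSq (T a b) * ν b * (ν b / (μ a + s * ν b)) : ℝ) : ℂ) := by
      rw [Matrix.trace]
      have hdiag : ∀ b, (Dν * (Nᴴ * T)).diag b
          = ((∑ a, Complex.normSq (T a b) * ν b * (ν b / (μ a + s * ν b)) : ℝ) : ℂ) := by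
        intro b
        rw [Matrix.diag_apply, hDν, Matrix.diagonal_mul, Matrix.mul_apply]
        push_cast
        rw [Finset.mul_sum]
        refine Finset.sum_congr rfl fun a _ => ?_
        rw [Matrix.conjTranspose_apply, hN, Matrix.of_apply, star_mul']
        have h1 : star (T a b) * T a b = (Complex.normSq (T a b) : ℂ) := by
          rw [Complex.star_def, ← Complex.normSq_eq_conj_mul_self]
        have h2 : star (((ν b / (μ a + s * ν b) : ℝ) : ℂ))
            = ((ν b / (μ a + s * ν b) : ℝ) : ℂ) := by
          rw [Complex.star_def, Complex.conj_ofReal]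
        rw [h2, mul_assoc, h1]
        push_cast
        ring
      rw [Finset.sum_congr rfl fun b _ => hdiag b, ← Complex.ofReal_sum]
      norm_cast
      exact Finset.sum_comm
    rw [c6, Complex.ofReal_re]

variable {ρ σ : Mat d}

lemma opt_exists (hρ : ρ.PosSemidef) (hσ : σ.PosSemidef) {s : ℝ} (hs : 0 < s) :
    ∃ Ys : Mat d, (σ * Ys + (s : ℂ) • (Ys * ρ) = ρ) ∧
      (ρ * Ysᴴ).trace.re = ∑ a, ∑ b, tmat hρ hσ a b * hρ.isHermitian.eigenvalues b *
        (hρ.isHermitian.eigenvalues b /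
          (hσ.isHermitian.eigenvalues a + s * hρ.isHermitian.eigenvalues b)) := by
  obtain ⟨Ys, h1, h2⟩ := opt_exists_gen ρ σ
    (hρ.isHermitian.eigenvectorUnitary : Mat d) (hσ.isHermitian.eigenvectorUnitary : Mat d)
    hρ.isHermitian.eigenvalues hσ.isHermitian.eigenvalues
    (spectral_ofReal hρ) (spectral_ofReal hσ)
    (star_mul_unit hρ) (star_mul_unit hσ) (unit_mul_star hσ)
    hρ.eigenvalues_nonneg hσ.eigenvalues_nonneg hs
  exact ⟨Ys, h1, by rw [h2]; rfl⟩

end Optimizer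

section Assembly

variable {ρ σ : Mat d}

lemma Ffun_opt_eq (hρ : ρ.PosSemidef) (hσ : σ.PosSemidef) {s : ℝ}
    {Ys : Mat d} (hE : σ * Ys + (s : ℂ) • (Ys * ρ) = ρ) :
    Ffun ρ σ s Ys = (ρ * Ysᴴ).trace.re := by
  have hσYs : σ * Ys = ρ - (s : ℂ) • (Ys * ρ) := eq_sub_of_add_eq hE
  have h1 : (Ysᴴ * σ * Ys).trace = (ρ * Ysᴴ).trace - (s : ℂ) * (ρ * Ysᴴ * Ys).trace := by
    rw [Matrix.mul_assoc, hσYs, Matrix.mul_sub, Matrix.trace_sub, Matrix.mul_smul,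
      Matrix.trace_smul, smul_eq_mul]
    congr 1
    · exact Matrix.trace_mul_comm _ _
    · congr 1
      rw [← Matrix.mul_assoc, Matrix.trace_mul_comm, Matrix.mul_assoc]
  have hre := congrArg Complex.re h1
  simp only [Complex.sub_re] at hre
  have hsre : ((s : ℂ) * (ρ * Ysᴴ * Ys).trace).re = s * (ρ * Ysᴴ * Ys).trace.re := by
    simp [Complex.mul_re]
  rw [hsre] at hre
  unfold Ffun
  linarith

lemma sum_tmat_mul (hρ : ρ.PosSemidef) (hσ : σ.PosSemidef) :
    ∑ p : Fin d × Fin d, tmat hρ hσ p.1 p.2 * hρ.isHermitian.eigenvalues p.2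
      = ρ.trace.re := by
  rw [Fintype.sum_prod_type, Finset.sum_comm, ← eig_sum_eq_trace_re hρ]
  refine Finset.sum_congr rfl fun b _ => ?_
  dsimp only
  rw [← Finset.sum_mul, tmat_sum_left hρ hσ, one_mul]

lemma Dsum_eq (hρ : ρ.PosSemidef) (hσ : σ.PosSemidef) :
    (ρ * mlog ρ).trace.re - (ρ * mlog σ).trace.re
      = ∑ p : Fin d × Fin d, tmat hρ hσ p.1 p.2 * hρ.isHermitian.eigenvalues p.2 *
          (Real.log (hρ.isHermitian.eigenvalues p.2)
            - Real.log (hσ.isHermitian.eigenvalues p.1)) := by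
  rw [trace_mul_mlog_self hρ, trace_mul_mlog hρ hσ, Fintype.sum_prod_type]
  dsimp only
  have h1 : ∑ a, ∑ b, tmat hρ hσ a b * hρ.isHermitian.eigenvalues b *
      Real.log (hρ.isHermitian.eigenvalues b)
      = ∑ b, hρ.isHermitian.eigenvalues b * Real.log (hρ.isHermitian.eigenvalues b) := by
    rw [Finset.sum_comm]
    refine Finset.sum_congr rfl fun b _ => ?_
    simp only [mul_assoc]
    rw [← Finset.sum_mul, tmat_sum_left hρ hσ, one_mul]
  simp only [mul_sub, Finset.sum_sub_distrib]
  rw [h1]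

/-- Data-processing inequality for `relEnt`. -/
lemma relEnt_mono (A : Fin m → Mat d) (hU : ∑ k, A k * (A k)ᴴ = 1)
    {P Q : Mat d} (hP : P.PosSemidef) (hQ : Q.PosSemidef) :
    relEnt (∑ k, (A k)ᴴ * P * A k) (∑ k, (A k)ᴴ * Q * A k) ≤ relEnt P Q := by
  by_cases hsupp : suppLE P Q
  · have hP' := posSemidef_phi A hP
    have hQ' := posSemidef_phi A hQ
    have hsupp' : suppLE (∑ k, (A k)ᴴ * P * A k) (∑ k, (A k)ᴴ * Q * A k) :=
      suppLE_of_ker' hP'.isHermitian (hQ'.isHermitian.eigenvectorUnitary : Mat d)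
        hQ'.isHermitian.eigenvalues (star_mul_unit hQ') (unit_mul_star hQ')
        (spectral_ofReal hQ') (ker_transfer A hQ (ker_of_suppLE hP hQ hsupp))
    simp only [relEnt, if_pos hsupp, if_pos hsupp', EReal.coe_le_coe_iff]
    rw [Dsum_eq hP hQ, Dsum_eq hP' hQ']
    refine bridge (fun p : Fin d × Fin d => tmat hP hQ p.1 p.2)
      (fun p => hQ.isHermitian.eigenvalues p.1) (fun p => hP.isHermitian.eigenvalues p.2)
      (fun p : Fin d × Fin d => tmat hP' hQ' p.1 p.2)
      (fun p => hQ'.isHermitian.eigenvalues p.1) (fun p => hP'.isHermitian.eigenvalues p.2)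
      (fun p => tmat_nonneg hP hQ p.1 p.2) (fun p => hQ.eigenvalues_nonneg p.1)
      (fun p => hP.eigenvalues_nonneg p.2)
      (fun p => tmat_nonneg hP' hQ' p.1 p.2) (fun p => hQ'.eigenvalues_nonneg p.1)
      (fun p => hP'.eigenvalues_nonneg p.2)
      ?_ ?_ ?_ ?_
    · intro p ht0 hν0
      rcases (hQ.eigenvalues_nonneg p.1).lt_or_eq with h | h
      · exact h
      · exact absurd (tmat_supp hP hQ hsupp p.1 p.2 h.symm hν0) ht0
    · intro p ht0 hν0
      rcases (hQ'.eigenvalues_nonneg p.1).lt_or_eq with h | h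
      · exact h
      · exact absurd (tmat_supp hP' hQ' hsupp' p.1 p.2 h.symm hν0) ht0
    · rw [sum_tmat_mul hP hQ, sum_tmat_mul hP' hQ']
      have := congrArg Complex.re (trace_phi A hU P)
      rw [this]
    · intro s hs
      obtain ⟨Ys, hE, hval⟩ := opt_exists hP hQ hs
      obtain ⟨Ys', hE', hval'⟩ := opt_exists hP' hQ' hs
      calc ∑ p : Fin d × Fin d, tmat hP' hQ' p.1 p.2 * hP'.isHermitian.eigenvalues p.2 *
            (hP'.isHermitian.eigenvalues p.2 /
              (hQ'.isHermitian.eigenvalues p.1 + s * hP'.isHermitian.eigenvalues p.2))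
          = Ffun (∑ k, (A k)ᴴ * P * A k) (∑ k, (A k)ᴴ * Q * A k) s Ys' := by
            rw [Fintype.sum_prod_type]
            dsimp only
            rw [← hval', Ffun_opt_eq hP' hQ' hE']
        _ ≤ Ffun P Q s (∑ k, A k * Ys' * (A k)ᴴ) := Ffun_phiHat A hU hP hQ hs.le Ys'
        _ ≤ (P * Ysᴴ).trace.re := Ffun_le_opt hP hQ hs.le hE _
        _ = _ := by
            rw [hval, Fintype.sum_prod_type]
  · simp only [relEnt, if_neg hsupp]
    exact le_top

end Assembly


end DPIProof

/-- Monotonicity of the measurement relative entropy under pre-composition with a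
unital CPTP map `E` (given in Kraus form), i.e. under replacing each POVM element
`M_x` by `E†(M_x) = Σ_k A_kᴴ M_x A_k`. -/
theorem stmt7 {d n m : ℕ} (hd : 0 < d)
    (A : Fin m → Matrix (Fin d) (Fin d) ℂ)
    (hTP : ∑ k, (A k)ᴴ * A k = 1)
    (hUnital : ∑ k, A k * (A k)ᴴ = 1)
    (M N : Fin n → Matrix (Fin d) (Fin d) ℂ)
    (hMpos : ∀ x, (M x).PosSemidef) (hMsum : ∑ x, M x = 1)
    (hNpos : ∀ x, (N x).PosSemidef) (hNsum : ∑ x, N x = 1) :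
    measRelEnt d (fun x => ∑ k, (A k)ᴴ * M x * A k)
        (fun x => ∑ k, (A k)ᴴ * N x * A k) ≤
      measRelEnt d M N := by
  unfold measRelEnt
  refine mul_le_mul_of_nonneg_left ?_ (EReal.coe_nonneg.mpr (by positivity))
  exact Finset.sum_le_sum fun x _ =>
    DPIProof.relEnt_mono A hUnital (hMpos x) (hNpos x)
end

section
/- A channel E on ℂ^d is detection-incoherent (Δ∘E = Δ∘E∘Δ) if and only if its measurement-cohering power vanishes, i.e., C_m(I∘E) = 0 where I is the incoherent basis measurement; equivalently, E†(|i⟩⟨i|) is diagonal in the incoherent basis for every basis element |i⟩. -/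
open Matrix Finset
open Kronecker
open scoped Classical ComplexOrder

variable {ι : Type*} [Fintype ι] [DecidableEq ι]

/-- A quantum channel in Kraus form (Schrödinger picture). -/
noncomputable def chan {ι : Type*} [Fintype ι] {m : ℕ} (A : Fin m → Matrix ι ι ℂ)
    (ρ : Matrix ι ι ℂ) : Matrix ι ι ℂ :=
  ∑ k, A k * ρ * (A k)ᴴ

/-- The adjoint (Heisenberg picture) of a channel in Kraus form. -/
noncomputable def adj {ι : Type*} [Fintype ι] {m : ℕ} (A : Fin m → Matrix ι ι ℂ)
    (X : Matrix ι ι ℂ) : Matrix ι ι ℂ :=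
  ∑ k, (A k)ᴴ * X * A k

set_option linter.unusedSectionVars false

lemma entry_eq {N : Matrix ι ι ℂ} (hN : N.IsHermitian) (i k : ι) :
    N i k = ∑ j, (hN.eigenvectorUnitary : Matrix ι ι ℂ) i j * (hN.eigenvalues j : ℂ) *
      (starRingEnd ℂ) ((hN.eigenvectorUnitary : Matrix ι ι ℂ) k j) := by
  conv_lhs => rw [hN.spectral_theorem, Unitary.conjStarAlgAut_apply]
  rw [Matrix.mul_apply]
  refine Finset.sum_congr rfl fun j _ => ?_
  rw [Matrix.mul_diagonal, Matrix.star_apply]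
  simp [Function.comp, RCLike.star_def]

lemma trace_mul_mlog {N : Matrix ι ι ℂ} (hN : N.IsHermitian) :
    (N * mlog N).trace = ∑ j, ((hN.eigenvalues j : ℂ) * (Real.log (hN.eigenvalues j) : ℂ)) := by
  set U : Matrix ι ι ℂ := (hN.eigenvectorUnitary : Matrix ι ι ℂ) with hU
  have hUU : star U * U = 1 := hN.eigenvectorUnitary.2.1
  set D := Matrix.diagonal (fun j => (hN.eigenvalues j : ℂ)) with hDdef
  set L := Matrix.diagonal (fun j => (Real.log (hN.eigenvalues j) : ℂ)) with hLdef
  have hs : N = U * D * star U := by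
    have := hN.spectral_theorem
    rw [Unitary.conjStarAlgAut_apply] at this
    exact this
  rw [mlog, dif_pos hN]
  nth_rewrite 1 [hs]
  have : U * D * star U * (U * L * star U) = U * (D * L) * star U := by
    rw [show U * D * star U * (U * L * star U) = U * D * (star U * U) * L * star U by
      noncomm_ring]
    rw [hUU]; noncomm_ring
  rw [this, Matrix.trace_mul_cycle, ← Matrix.mul_assoc, hUU, Matrix.one_mul,
    Matrix.diagonal_mul_diagonal, Matrix.trace_diagonal]

lemma vnEnt_eq {N : Matrix ι ι ℂ} (hN : N.IsHermitian) :
    vnEnt N = ∑ j, Real.negMulLog (hN.eigenvalues j) := by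
  rw [vnEnt, trace_mul_mlog hN]
  simp only [← Complex.ofReal_mul, ← Complex.ofReal_sum, Complex.ofReal_re, Real.negMulLog,
    neg_mul, Finset.sum_neg_distrib]

open Matrix Finset
open scoped Classical ComplexOrder

variable {ι : Type*} [Fintype ι] [DecidableEq ι]

lemma isHermitian_diag_real (r : ι → ℝ) :
    (Matrix.diagonal (fun i => (r i : ℂ))).IsHermitian := by
  rw [Matrix.IsHermitian, Matrix.diagonal_conjTranspose]
  exact congrArg Matrix.diagonal (funext fun i => by
    rw [Pi.star_apply, RCLike.star_def, Complex.conj_ofReal])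

/-- eigenvector entries relate entries and eigenvalues for a diagonal matrix -/
lemma diag_eigen_rel (r : ι → ℝ) (i j : ι) :
    ((isHermitian_diag_real r).eigenvectorUnitary : Matrix ι ι ℂ) i j ≠ 0 →
      r i = (isHermitian_diag_real r).eigenvalues j := by
  intro hne
  set h := isHermitian_diag_real r
  set U : Matrix ι ι ℂ := (h.eigenvectorUnitary : Matrix ι ι ℂ) with hU
  have hUU : U * star U = 1 := h.eigenvectorUnitary.2.2
  have hs : Matrix.diagonal (fun i => (r i : ℂ)) * U
      = U * Matrix.diagonal (fun j => (h.eigenvalues j : ℂ)) := by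
    have h1 := h.spectral_theorem
    rw [Unitary.conjStarAlgAut_apply] at h1
    calc Matrix.diagonal (fun i => (r i : ℂ)) * U
        = (U * Matrix.diagonal (RCLike.ofReal ∘ h.eigenvalues) * star U) * U := by rw [← h1]
      _ = U * Matrix.diagonal (RCLike.ofReal ∘ h.eigenvalues) * (star U * U) := by noncomm_ring
      _ = U * Matrix.diagonal (fun j => (h.eigenvalues j : ℂ)) := by
          rw [h.eigenvectorUnitary.2.1, Matrix.mul_one]; rfl
  have := congrFun (congrFun hs i) j
  rw [Matrix.diagonal_mul, Matrix.mul_diagonal] at this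
  have h4 : (r i : ℂ) * U i j = (h.eigenvalues j : ℂ) * U i j := by rw [this]; ring
  have h2 : (r i : ℂ) = (h.eigenvalues j : ℂ) := mul_right_cancel₀ hne h4
  exact_mod_cast h2

lemma mlog_diag_real (r : ι → ℝ) :
    mlog (Matrix.diagonal (fun i => (r i : ℂ)))
      = Matrix.diagonal (fun i => (Real.log (r i) : ℂ)) := by
  set h := isHermitian_diag_real r
  rw [mlog, dif_pos h]
  set U : Matrix ι ι ℂ := (h.eigenvectorUnitary : Matrix ι ι ℂ) with hU
  have hUU : U * star U = 1 := h.eigenvectorUnitary.2.2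
  ext i k
  rw [Matrix.mul_apply]
  have hterm : ∀ j, (U * Matrix.diagonal fun i => (Real.log (h.eigenvalues i) : ℂ)) i j
      * (star U) j k = U i j * (Real.log (r i) : ℂ) * (starRingEnd ℂ) (U k j) := by
    intro j
    rw [Matrix.mul_diagonal, Matrix.star_apply, RCLike.star_def]
    by_cases hz : U i j = 0
    · simp [hz]
    · rw [diag_eigen_rel r i j hz]
  rw [Finset.sum_congr rfl (fun j _ => hterm j)]
  have : ∑ j, U i j * (Real.log (r i) : ℂ) * (starRingEnd ℂ) (U k j)
      = (Real.log (r i) : ℂ) * ∑ j, U i j * (starRingEnd ℂ) (U k j) := by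
    rw [Finset.mul_sum]; refine Finset.sum_congr rfl fun j _ => by ring
  rw [this]
  have hone : ∑ j, U i j * (starRingEnd ℂ) (U k j) = (1 : Matrix ι ι ℂ) i k := by
    rw [← hUU, Matrix.mul_apply]
    refine Finset.sum_congr rfl fun j _ => by rw [Matrix.star_apply, RCLike.star_def]
  rw [hone]
  by_cases hik : i = k
  · subst hik; simp
  · simp [Matrix.one_apply_ne hik, Matrix.diagonal_apply_ne _ hik]

lemma vnEnt_diag_real (r : ι → ℝ) :
    vnEnt (Matrix.diagonal (fun i => (r i : ℂ))) = ∑ i, Real.negMulLog (r i) := by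
  rw [vnEnt, mlog_diag_real, Matrix.diagonal_mul_diagonal, Matrix.trace_diagonal]
  simp only [← Complex.ofReal_mul, ← Complex.ofReal_sum, Complex.ofReal_re, Real.negMulLog,
    neg_mul, Finset.sum_neg_distrib]

lemma deph_eq_diag_re {N : Matrix ι ι ℂ} (hN : N.IsHermitian) :
    deph N = Matrix.diagonal (fun i => ((N i i).re : ℂ)) := by
  unfold deph
  refine congrArg Matrix.diagonal (funext fun i => ?_)
  have h1 : (starRingEnd ℂ) (N i i) = N i i := by
    conv_rhs => rw [← hN]
    rfl
  exact (Complex.conj_eq_iff_re.mp h1).symm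

lemma row_exists {N : Matrix ι ι ℂ} (hH : N.IsHermitian) (i : ι) :
    ∃ j, (hH.eigenvectorUnitary : Matrix ι ι ℂ) i j ≠ 0 := by
  by_contra hc
  push_neg at hc
  have hUU : (hH.eigenvectorUnitary : Matrix ι ι ℂ) * star (hH.eigenvectorUnitary : Matrix ι ι ℂ)
      = 1 := hH.eigenvectorUnitary.2.2
  have h1 := congrFun (congrFun hUU i) i
  rw [Matrix.mul_apply] at h1
  simp only [hc, zero_mul, Finset.sum_const_zero] at h1
  exact zero_ne_one (h1.trans (Matrix.one_apply_eq i))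

/-- If some off-diagonal entry of a Hermitian matrix is nonzero, then some row of the
eigenvector unitary has two nonzero entries with distinct eigenvalues. -/
lemma nonconst_of_offdiag {N : Matrix ι ι ℂ} (hH : N.IsHermitian) {i k : ι}
    (hik : i ≠ k) (hNik : N i k ≠ 0) :
    ∃ j1 j2, (hH.eigenvectorUnitary : Matrix ι ι ℂ) i j1 ≠ 0 ∧
      (hH.eigenvectorUnitary : Matrix ι ι ℂ) i j2 ≠ 0 ∧
      hH.eigenvalues j1 ≠ hH.eigenvalues j2 := by
  by_contra hc
  push_neg at hc
  set U : Matrix ι ι ℂ := (hH.eigenvectorUnitary : Matrix ι ι ℂ) with hUdef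
  obtain ⟨j0, hj0⟩ := row_exists hH i
  have hconst : ∀ j, U i j ≠ 0 → hH.eigenvalues j = hH.eigenvalues j0 :=
    fun j hj => hc j j0 hj hj0
  have hUU : U * star U = 1 := hH.eigenvectorUnitary.2.2
  apply hNik
  rw [entry_eq hH i k]
  have hterm : ∀ j, U i j * (hH.eigenvalues j : ℂ) * (starRingEnd ℂ) (U k j)
      = (hH.eigenvalues j0 : ℂ) * (U i j * (starRingEnd ℂ) (U k j)) := by
    intro j
    by_cases hz : U i j = 0
    · simp [hz]
    · rw [hconst j hz]; ring
  rw [Finset.sum_congr rfl (fun j _ => hterm j), ← Finset.mul_sum]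
  have hone : ∑ j, U i j * (starRingEnd ℂ) (U k j) = (0 : ℂ) := by
    have h1 := congrFun (congrFun hUU i) k
    rw [Matrix.mul_apply] at h1
    rw [← Matrix.one_apply_ne hik, ← h1]
    refine Finset.sum_congr rfl fun j _ => by rw [Matrix.star_apply, RCLike.star_def]
  rw [hone, mul_zero]

lemma vnEnt_deph_main {N : Matrix ι ι ℂ} (hN : N.PosSemidef) :
    vnEnt N ≤ vnEnt (deph N) ∧ (deph N ≠ N → vnEnt N < vnEnt (deph N)) := by
  have hH := hN.isHermitian
  set U : Matrix ι ι ℂ := (hH.eigenvectorUnitary : Matrix ι ι ℂ) with hUdef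
  set lam := hH.eigenvalues with hlamdef
  set B : ι → ι → ℝ := fun i j => Complex.normSq (U i j) with hBdef
  have hUU : U * star U = 1 := hH.eigenvectorUnitary.2.2
  have hUU' : star U * U = 1 := hH.eigenvectorUnitary.2.1
  have hBnn : ∀ i j, 0 ≤ B i j := fun i j => Complex.normSq_nonneg _
  have hrow : ∀ i, ∑ j, B i j = 1 := by
    intro i
    have h1 := congrFun (congrFun hUU i) i
    rw [Matrix.mul_apply] at h1
    have h2 : ((∑ j, U i j * (star U) j i)).re = 1 := by rw [h1, Matrix.one_apply_eq]; rfl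
    rw [Complex.re_sum] at h2
    rw [← h2]
    refine Finset.sum_congr rfl fun j _ => ?_
    rw [Matrix.star_apply, RCLike.star_def, Complex.mul_conj]
    simp [hBdef]
  have hcol : ∀ j, ∑ i, B i j = 1 := by
    intro j
    have h1 := congrFun (congrFun hUU' j) j
    rw [Matrix.mul_apply] at h1
    have h2 : ((∑ i, (star U) j i * U i j)).re = 1 := by rw [h1, Matrix.one_apply_eq]; rfl
    rw [Complex.re_sum] at h2
    rw [← h2]
    refine Finset.sum_congr rfl fun i _ => ?_
    rw [Matrix.star_apply, RCLike.star_def, mul_comm, Complex.mul_conj]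
    simp [hBdef]
  have hq : ∀ i, (N i i).re = ∑ j, B i j * lam j := by
    intro i
    have h1 := congrArg Complex.re (entry_eq hH i i)
    rw [Complex.re_sum] at h1
    rw [h1]
    refine Finset.sum_congr rfl fun j _ => ?_
    have : U i j * (lam j : ℂ) * (starRingEnd ℂ) (U i j)
        = ((lam j * Complex.normSq (U i j) : ℝ) : ℂ) := by
      push_cast
      rw [← Complex.mul_conj]
      ring
    rw [this, Complex.ofReal_re]
    ring
  have hmem : ∀ j, lam j ∈ Set.Ici (0:ℝ) := fun j => hN.eigenvalues_nonneg j
  -- per-row Jensen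
  have hrowle : ∀ i, ∑ j, B i j * Real.negMulLog (lam j) ≤ Real.negMulLog ((N i i).re) := by
    intro i
    set t := Finset.univ.filter (fun j => B i j ≠ 0) with htdef
    have hext : ∀ f : ι → ℝ, ∑ j ∈ t, B i j * f j = ∑ j, B i j * f j := by
      intro f
      refine Finset.sum_subset (Finset.filter_subset _ _) fun j _ hj => ?_
      have : B i j = 0 := by
        by_contra hb; exact hj (Finset.mem_filter.mpr ⟨Finset.mem_univ j, hb⟩)
      rw [this, zero_mul]
    have hsum_t : ∑ j ∈ t, B i j = 1 := by
      have := hext (fun _ => 1); simp only [mul_one] at this; rw [this, hrow i]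
    have hJ := Real.concaveOn_negMulLog.le_map_sum (t := t) (w := B i) (p := lam)
        (fun j _ => hBnn i j) hsum_t (fun j _ => hmem j)
    simp only [smul_eq_mul] at hJ
    rw [hext, hext] at hJ
    rwa [← hq i] at hJ
  have hstrict : ∀ i, (∃ j1 j2, B i j1 ≠ 0 ∧ B i j2 ≠ 0 ∧ lam j1 ≠ lam j2) →
      ∑ j, B i j * Real.negMulLog (lam j) < Real.negMulLog ((N i i).re) := by
    intro i hex
    set t := Finset.univ.filter (fun j => B i j ≠ 0) with htdef
    have hext : ∀ f : ι → ℝ, ∑ j ∈ t, B i j * f j = ∑ j, B i j * f j := by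
      intro f
      refine Finset.sum_subset (Finset.filter_subset _ _) fun j _ hj => ?_
      have : B i j = 0 := by
        by_contra hb; exact hj (Finset.mem_filter.mpr ⟨Finset.mem_univ j, hb⟩)
      rw [this, zero_mul]
    have hsum_t : ∑ j ∈ t, B i j = 1 := by
      have := hext (fun _ => 1); simp only [mul_one] at this; rw [this, hrow i]
    obtain ⟨j1, j2, h1, h2, h12⟩ := hex
    have hJ := Real.strictConcaveOn_negMulLog.lt_map_sum (t := t) (w := B i) (p := lam)
        (fun j hj => lt_of_le_of_ne (hBnn i j) (Ne.symm (Finset.mem_filter.mp hj).2))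
        hsum_t (fun j _ => hmem j)
        ⟨j1, Finset.mem_filter.mpr ⟨Finset.mem_univ _, h1⟩,
         j2, Finset.mem_filter.mpr ⟨Finset.mem_univ _, h2⟩, h12⟩
    simp only [smul_eq_mul] at hJ
    rw [hext, hext] at hJ
    rwa [← hq i] at hJ
  have hENT : vnEnt N = ∑ i, ∑ j, B i j * Real.negMulLog (lam j) := by
    rw [vnEnt_eq hH, Finset.sum_comm]
    refine Finset.sum_congr rfl fun j _ => ?_
    rw [← Finset.sum_mul, hcol j, one_mul]
  have hDEPH : vnEnt (deph N) = ∑ i, Real.negMulLog ((N i i).re) := by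
    rw [deph_eq_diag_re hH, vnEnt_diag_real]
  constructor
  · rw [hENT, hDEPH]
    exact Finset.sum_le_sum fun i _ => hrowle i
  · intro hne
    have hoff : ∃ i k, i ≠ k ∧ N i k ≠ 0 := by
      by_contra hc
      push_neg at hc
      apply hne
      ext i k
      by_cases h : i = k
      · subst h; rw [deph, Matrix.diagonal_apply_eq]
      · rw [deph, Matrix.diagonal_apply_ne _ h]; exact (hc i k h).symm
    obtain ⟨i, k, hik, hNik⟩ := hoff
    obtain ⟨j1, j2, h1, h2, h12⟩ := nonconst_of_offdiag hH hik hNik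
    rw [hENT, hDEPH]
    refine Finset.sum_lt_sum (fun i _ => hrowle i) ⟨i, Finset.mem_univ i, hstrict i
      ⟨j1, j2, ?_, ?_, h12⟩⟩
    · simpa [hBdef, hUdef, Complex.normSq_eq_zero] using h1
    · simpa [hBdef, hUdef, Complex.normSq_eq_zero] using h2


lemma adj_apply {m : ℕ} (A : Fin m → Matrix ι ι ℂ) (i b a : ι) :
    adj A (Matrix.single i i 1) b a
      = ∑ k, (starRingEnd ℂ) (A k i b) * A k i a := by
  unfold adj
  rw [Matrix.sum_apply]
  refine Finset.sum_congr rfl fun k _ => ?_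
  rw [Matrix.mul_apply]
  have : ∀ p, ((A k)ᴴ * Matrix.single i i (1:ℂ)) b p * A k p a
      = (if p = i then (starRingEnd ℂ) (A k i b) * A k i a else 0) := by
    intro p
    rw [Matrix.mul_apply]
    by_cases hp : p = i
    · subst hp
      simp [Matrix.single, Matrix.conjTranspose_apply, Finset.sum_ite_eq,
        mul_ite, ite_mul, RCLike.star_def]
    · simp [Matrix.single, Ne.symm hp, mul_ite, ite_mul, hp]
  rw [Finset.sum_congr rfl fun p _ => this p, Finset.sum_ite_eq' Finset.univ i]
  simp

lemma chan_diag {m : ℕ} (A : Fin m → Matrix ι ι ℂ) (ρ : Matrix ι ι ℂ) (i : ι) :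
    (chan A ρ) i i = ∑ a, ∑ b, (adj A (Matrix.single i i 1)) b a * ρ a b := by
  unfold chan
  rw [Matrix.sum_apply]
  have lhs_eq : ∀ k, (A k * ρ * (A k)ᴴ) i i
      = ∑ a, ∑ b, A k i a * ρ a b * (starRingEnd ℂ) (A k i b) := by
    intro k
    rw [Matrix.mul_apply]
    rw [Finset.sum_comm]
    refine Finset.sum_congr rfl fun b _ => ?_
    rw [Matrix.mul_apply, Matrix.conjTranspose_apply, Finset.sum_mul]
    refine Finset.sum_congr rfl fun a _ => by rw [RCLike.star_def]
  rw [Finset.sum_congr rfl fun k _ => lhs_eq k]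
  rw [Finset.sum_comm]
  refine Finset.sum_congr rfl fun a _ => ?_
  rw [Finset.sum_comm]
  refine Finset.sum_congr rfl fun b _ => ?_
  rw [adj_apply, Finset.sum_mul]
  refine Finset.sum_congr rfl fun k _ => by ring

lemma adj_psd {m : ℕ} (A : Fin m → Matrix ι ι ℂ) (i : ι) :
    (adj A (Matrix.single i i 1)).PosSemidef := by
  have hE : (Matrix.single i i (1:ℂ)).PosSemidef := by
    have hEq : Matrix.single i i (1:ℂ)
        = Matrix.diagonal (fun j => if j = i then (1:ℂ) else 0) := by
      ext a b
      by_cases hab : a = b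
      · subst hab
        by_cases hai : a = i
        · subst hai; simp [Matrix.single]
        · simp [Matrix.single, hai, Ne.symm hai]
      · simp [Matrix.single, Matrix.diagonal_apply_ne _ hab]
        intro h1 h2; exact absurd (h1.symm.trans h2) hab
    rw [hEq]
    refine Matrix.posSemidef_diagonal_iff.mpr fun j => ?_
    by_cases hj : j = i <;> simp [hj]
  unfold adj
  refine Finset.sum_induction _ _ (fun a b ha hb => ha.add hb) Matrix.PosSemidef.zero
    fun k _ => hE.conjTranspose_mul_mul_same (A k)

/-- A channel is detection-incoherent iff its measurement-cohering power vanishes,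
iff the adjoint maps every incoherent basis projector to a diagonal matrix. -/
theorem stmt16 {d : ℕ} (hd : 0 < d) {nE : ℕ}
    (A : Fin nE → Matrix (Fin d) (Fin d) ℂ)
    (hTP : ∑ k, (A k)ᴴ * A k = 1) :
    ((∀ ρ : Matrix (Fin d) (Fin d) ℂ, deph (chan A ρ) = deph (chan A (deph ρ))) ↔
      (d : ℝ)⁻¹ * ∑ i, (vnEnt (deph (adj A (Matrix.single i i (1 : ℂ)))) -
        vnEnt (adj A (Matrix.single i i (1 : ℂ)))) = 0) ∧
    ((∀ ρ : Matrix (Fin d) (Fin d) ℂ, deph (chan A ρ) = deph (chan A (deph ρ))) ↔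
      ∀ i, deph (adj A (Matrix.single i i (1 : ℂ))) =
        adj A (Matrix.single i i (1 : ℂ))) := by
  classical
  set Nf : Fin d → Matrix (Fin d) (Fin d) ℂ :=
    fun i => adj A (Matrix.single i i (1 : ℂ)) with hNf
  have hiff2 : (∀ ρ : Matrix (Fin d) (Fin d) ℂ, deph (chan A ρ) = deph (chan A (deph ρ))) ↔
      ∀ i, deph (Nf i) = Nf i := by
    constructor
    · intro h i
      ext b a
      by_cases hba : b = a
      · subst hba; rw [deph, Matrix.diagonal_apply_eq]
      · rw [deph, Matrix.diagonal_apply_ne _ hba]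
        have hd0 : deph (Matrix.single a b (1:ℂ)) = 0 := by
          unfold deph
          ext p q
          by_cases hpq : p = q
          · subst hpq
            rw [Matrix.diagonal_apply_eq]
            have : ¬(a = p ∧ b = p) := by
              rintro ⟨rfl, rfl⟩; exact hba rfl
            simp [Matrix.single, this]
          · simp [Matrix.diagonal_apply_ne _ hpq]
        have h1 := congrFun (congrFun (h (Matrix.single a b (1:ℂ))) i) i
        rw [hd0] at h1
        have hch0 : chan A (0 : Matrix (Fin d) (Fin d) ℂ) = 0 := by
          unfold chan; simp
        rw [hch0] at h1
        have h2 : (chan A (Matrix.single a b (1:ℂ))) i i = 0 := by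
          have := h1
          rw [deph, Matrix.diagonal_apply_eq] at this
          simpa [deph] using this
        rw [chan_diag] at h2
        have h3 : ∑ a', ∑ b', Nf i b' a' * (Matrix.single a b (1:ℂ)) a' b'
            = Nf i b a := by
          rw [Finset.sum_comm]
          have hrow : ∀ b', ∑ a', Nf i b' a' * (Matrix.single a b (1:ℂ)) a' b'
              = (if b' = b then Nf i b' a else 0) := by
            intro b'
            by_cases hb' : b' = b
            · subst hb'
              rw [Finset.sum_eq_single a]
              · simp [Matrix.single]
              · intro a' _ ha'; simp [Matrix.single, Ne.symm ha']
              · intro h; exact absurd (Finset.mem_univ a) h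
            · rw [if_neg hb']
              refine Finset.sum_eq_zero fun a' _ => ?_
              simp [Matrix.single, Ne.symm hb']
          rw [Finset.sum_congr rfl fun b' _ => hrow b', Finset.sum_ite_eq' Finset.univ b]
          simp
        rw [h3] at h2
        exact h2.symm
    · intro h ρ
      ext i k
      by_cases hik : i = k
      · subst hik
        show (Matrix.diagonal fun j => (chan A ρ) j j) i i
          = (Matrix.diagonal fun j => (chan A (deph ρ)) j j) i i
        rw [Matrix.diagonal_apply_eq, Matrix.diagonal_apply_eq, chan_diag, chan_diag]
        have hdiagN : ∀ b a : Fin d, b ≠ a →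
            adj A (Matrix.single i i (1:ℂ)) b a = 0 := by
          intro b a hba
          have h5 := congrFun (congrFun (h i) b) a
          rw [show deph (Nf i) b a = (Matrix.diagonal fun j => (Nf i) j j) b a from rfl,
            Matrix.diagonal_apply_ne _ hba] at h5
          exact h5.symm
        refine Finset.sum_congr rfl fun a _ => Finset.sum_congr rfl fun b _ => ?_
        by_cases hab : a = b
        · subst hab
          rw [show deph ρ a a = (Matrix.diagonal fun j => ρ j j) a a from rfl,
            Matrix.diagonal_apply_eq]
        · rw [hdiagN b a (Ne.symm hab), zero_mul, zero_mul]
      · show (Matrix.diagonal fun j => (chan A ρ) j j) i k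
          = (Matrix.diagonal fun j => (chan A (deph ρ)) j j) i k
        rw [Matrix.diagonal_apply_ne _ hik, Matrix.diagonal_apply_ne _ hik]
  have hpsd : ∀ i, (Nf i).PosSemidef := fun i => adj_psd A i
  refine ⟨?_, hiff2⟩
  rw [hiff2]
  constructor
  · intro hall
    have hz : ∀ i ∈ Finset.univ, vnEnt (deph (Nf i)) - vnEnt (Nf i) = (0:ℝ) := by
      intro i _; rw [hall i]; ring
    rw [Finset.sum_congr rfl hz, Finset.sum_const_zero, mul_zero]
  · intro h
    have hinv : ((d:ℝ))⁻¹ ≠ 0 := inv_ne_zero (Nat.cast_ne_zero.mpr hd.ne')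
    have hsum0 : ∑ i, (vnEnt (deph (Nf i)) - vnEnt (Nf i)) = 0 := by
      rcases mul_eq_zero.mp h with h' | h'
      · exact absurd h' hinv
      · exact h'
    have hnn : ∀ i ∈ Finset.univ, (0:ℝ) ≤ vnEnt (deph (Nf i)) - vnEnt (Nf i) :=
      fun i _ => sub_nonneg.mpr (vnEnt_deph_main (hpsd i)).1
    have heach := (Finset.sum_eq_zero_iff_of_nonneg hnn).mp hsum0
    intro i
    by_contra hne
    have hlt := (vnEnt_deph_main (hpsd i)).2 hne
    have h0 := heach i (Finset.mem_univ i)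
    linarith
end
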